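/- arXiv:2508.12853 — 7 statements merged into one kernel-verified Lean document; each statement's English description precedes it below -/
import Mathlib

section
/- Let D ⊆ ℤ^d be a finite set of vectors and let F ⊆ ℤ^d be a finite H-representation of cone(D), i.e., cone(D) = {v ∈ ℝ^d : ⟨f,v⟩ ≥ 0 for all f ∈ F}. Then there exists M ∈ ℕ such that every v ∈ ℤ^d satisfying ⟨f,v⟩ ≥ M for all f ∈ F (in particular v ∈ cone(D)) lies in intCone(D) if and only if it lies in lattice(D). -/
/-- The real cone generated by the finite set `D` of integer vectors:
all non-negative real combinations of the vectors of `D`. -/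
def realCone {d : ℕ} (D : Finset (Fin d → ℤ)) : Set (Fin d → ℝ) :=
  {x | ∃ lam : (Fin d → ℤ) → ℝ, (∀ v, 0 ≤ lam v) ∧
    x = ∑ v ∈ D, lam v • (fun i => (v i : ℝ))}

/-- The integer cone generated by `D`: all non-negative integer combinations. -/
def intCone {d : ℕ} (D : Finset (Fin d → ℤ)) : Set (Fin d → ℤ) :=
  {x | ∃ lam : (Fin d → ℤ) → ℕ, x = ∑ v ∈ D, (lam v : ℤ) • v}

/-- The lattice generated by `D`: all integer combinations. -/
def intLattice {d : ℕ} (D : Finset (Fin d → ℤ)) : Set (Fin d → ℤ) :=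
  {x | ∃ lam : (Fin d → ℤ) → ℤ, x = ∑ v ∈ D, lam v • v}

/-- Deep-in-the-cone lemma: if `F` is an H-representation of `cone(D)`, then there
is `M ∈ ℕ` such that every integer vector `v` with `⟨f,v⟩ ≥ M` for all `f ∈ F`
lies in `intCone(D)` iff it lies in `lattice(D)`. -/
theorem deep_in_the_cone {d : ℕ} (D F : Finset (Fin d → ℤ))
    (hF : realCone D = {x : Fin d → ℝ | ∀ f ∈ F, 0 ≤ ∑ i, (f i : ℝ) * x i}) :
    ∃ M : ℕ, ∀ v : Fin d → ℤ, (∀ f ∈ F, (M : ℤ) ≤ ∑ i, f i * v i) →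
      (v ∈ intCone D ↔ v ∈ intLattice D) := by
  classical
  set w : Fin d → ℤ := ∑ u ∈ D, u with hw
  set B : Fin d → ℤ := fun i => ∑ u ∈ D, |u i| with hB
  set box : Finset (Fin d → ℤ) := Finset.Icc (fun i => -B i) B with hbox
  set Nr : (Fin d → ℤ) → ℕ := fun r =>
    if h : r ∈ intLattice D then D.sup (fun u => (h.choose u).natAbs) else 0 with hNr
  set N : ℕ := box.sup Nr with hN
  set T : ℕ := F.sup (fun f => (∑ i, f i * w i).toNat) with hT
  -- w is in the real cone
  have hwc : (fun i => ((w i : ℤ) : ℝ)) ∈ realCone D := by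
    refine ⟨fun u => if u ∈ D then 1 else 0, fun u => by positivity, ?_⟩
    have hsum : (∑ v ∈ D, (fun u => if u ∈ D then (1:ℝ) else 0) v • (fun i => (v i : ℝ)))
        = ∑ v ∈ D, (fun i => (v i : ℝ)) :=
      Finset.sum_congr rfl (fun u hu => by simp [hu])
    rw [hsum]
    funext i
    simp only [hw, Finset.sum_apply]
    push_cast
    rfl
  have hFw : ∀ f ∈ F, (0 : ℤ) ≤ ∑ i, f i * w i := by
    intro f hf
    have h0 := (hF ▸ hwc) f hf
    have h2 : (0:ℝ) ≤ ∑ i, ((f i * w i : ℤ) : ℝ) := by simpa using h0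
    exact_mod_cast h2
  have hTw : ∀ f ∈ F, (∑ i, f i * w i) ≤ (T : ℤ) := by
    intro f hf
    have h1 : (∑ i, f i * w i).toNat ≤ T := Finset.le_sup (f := fun f => (∑ i, f i * w i).toNat) hf
    exact le_trans (Int.self_le_toNat _) (by exact_mod_cast h1)
  refine ⟨N * T, fun v hv => ?_⟩
  constructor
  · rintro ⟨lam, rfl⟩
    exact ⟨fun u => (lam u : ℤ), rfl⟩
  · rintro ⟨mu, hmu⟩
    -- v - N • w lies in the real cone
    have hx : (fun i => ((v i : ℝ) - N * w i)) ∈ realCone D := by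
      rw [hF]
      intro f hf
      have h1 : ((N * T : ℕ) : ℤ) ≤ ∑ i, f i * v i := hv f hf
      have h2 : (N : ℤ) * (∑ i, f i * w i) ≤ (N : ℤ) * T :=
        mul_le_mul_of_nonneg_left (hTw f hf) (Int.ofNat_nonneg N)
      have h3 : (0 : ℤ) ≤ ∑ i, (f i * v i - N * (f i * w i)) := by
        rw [Finset.sum_sub_distrib, ← Finset.mul_sum]
        push_cast at h1
        linarith
      have h4 : (0 : ℝ) ≤ ∑ i, ((f i * v i - N * (f i * w i) : ℤ) : ℝ) := by
        exact_mod_cast h3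
      have heq : ∑ i, (f i : ℝ) * ((v i : ℝ) - N * w i)
          = ∑ i, ((f i * v i - N * (f i * w i) : ℤ) : ℝ) := by
        refine Finset.sum_congr rfl fun i _ => by push_cast; ring
      simpa [heq] using h4
    obtain ⟨lam, hlam0, hxe⟩ := hx
    have hxe' : ∀ i, (v i : ℝ) - N * w i = ∑ u ∈ D, lam u * u i := by
      intro i
      have := congrFun hxe i
      simpa [Finset.sum_apply] using this
    set r : Fin d → ℤ := fun i => v i - N * w i - ∑ u ∈ D, ⌊lam u⌋ * u i with hr
    have hrc : ∀ i, (r i : ℝ) = ∑ u ∈ D, Int.fract (lam u) * u i := by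
      intro i
      simp only [hr]
      push_cast
      rw [hxe' i, ← Finset.sum_sub_distrib]
      refine Finset.sum_congr rfl fun u _ => by rw [Int.fract]; ring
    have hrbound : ∀ i, |r i| ≤ B i := by
      intro i
      have h1 : |(r i : ℝ)| ≤ ((B i : ℤ) : ℝ) := by
        rw [hrc i]
        simp only [hB]
        push_cast
        calc |∑ u ∈ D, Int.fract (lam u) * u i|
            ≤ ∑ u ∈ D, |Int.fract (lam u) * u i| := Finset.abs_sum_le_sum_abs _ _
          _ ≤ ∑ u ∈ D, |(u i : ℝ)| := by
              refine Finset.sum_le_sum fun u _ => ?_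
              rw [abs_mul]
              have hfr : |Int.fract (lam u)| ≤ 1 := by
                rw [abs_of_nonneg (Int.fract_nonneg _)]
                exact (Int.fract_lt_one _).le
              exact mul_le_of_le_one_left (abs_nonneg _) hfr
      rw [← Int.cast_abs] at h1
      exact_mod_cast h1
    have hrbox : r ∈ box := by
      rw [hbox, Finset.mem_Icc]
      refine ⟨fun i => ?_, fun i => ?_⟩
      · exact (abs_le.mp (hrbound i)).1
      · exact (abs_le.mp (hrbound i)).2
    have hrL : r ∈ intLattice D := by
      refine ⟨fun u => mu u - N - ⌊lam u⌋, ?_⟩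
      funext i
      have hvi : v i = ∑ u ∈ D, mu u * u i := by
        rw [hmu]; simp [Finset.sum_apply]
      have hwi : w i = ∑ u ∈ D, u i := by
        rw [hw]; simp [Finset.sum_apply]
      simp only [hr, Finset.sum_apply, Pi.smul_apply, smul_eq_mul]
      rw [hvi, hwi, Finset.mul_sum, ← Finset.sum_sub_distrib, ← Finset.sum_sub_distrib]
      exact Finset.sum_congr rfl fun u _ => by ring
    have hrho : r = ∑ u ∈ D, hrL.choose u • u := hrL.choose_spec
    have hNrr : Nr r = D.sup (fun u => (hrL.choose u).natAbs) := by
      simp only [hNr]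
      exact dif_pos hrL
    have hNbig : ∀ u ∈ D, (hrL.choose u).natAbs ≤ N := by
      intro u hu
      calc (hrL.choose u).natAbs ≤ Nr r :=
            hNrr ▸ Finset.le_sup (f := fun u => (hrL.choose u).natAbs) hu
        _ ≤ N := Finset.le_sup hrbox
    have hkey : ∀ u ∈ D, (0 : ℤ) ≤ hrL.choose u + N + ⌊lam u⌋ := by
      intro u hu
      have h1 := hNbig u hu
      have h2 : (0 : ℤ) ≤ ⌊lam u⌋ := Int.floor_nonneg.mpr (hlam0 u)
      have h3 : |hrL.choose u| ≤ (N : ℤ) := by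
        rw [Int.abs_eq_natAbs]; exact_mod_cast h1
      linarith [neg_abs_le (hrL.choose u)]
    obtain ⟨rho, hrho', hrbig, hrkey⟩ :
        ∃ rho : (Fin d → ℤ) → ℤ, r = ∑ u ∈ D, rho u • u ∧
          (∀ u ∈ D, (rho u).natAbs ≤ N) ∧ (∀ u ∈ D, (0:ℤ) ≤ rho u + N + ⌊lam u⌋) :=
      ⟨hrL.choose, hrho, hNbig, hkey⟩
    clear hrho hNrr hNbig hkey
    refine ⟨fun u => (rho u + N + ⌊lam u⌋).toNat, ?_⟩
    funext i
    have hri : r i = ∑ u ∈ D, rho u * u i := by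
      have := congrFun hrho' i
      simpa [Finset.sum_apply] using this
    have hwi : w i = ∑ u ∈ D, u i := by
      rw [hw]; simp [Finset.sum_apply]
    have hdef : r i = v i - N * w i - ∑ u ∈ D, ⌊lam u⌋ * u i := by simp only [hr]
    have expand : ∑ u ∈ D, (rho u + (N : ℤ) + ⌊lam u⌋) * u i
        = (∑ u ∈ D, rho u * u i) + (N : ℤ) * (∑ u ∈ D, u i)
          + ∑ u ∈ D, ⌊lam u⌋ * u i := by
      rw [Finset.mul_sum, ← Finset.sum_add_distrib, ← Finset.sum_add_distrib]
      exact Finset.sum_congr rfl fun u _ => by ring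
    have hvfin : v i = ∑ u ∈ D, (rho u + (N : ℤ) + ⌊lam u⌋) * u i := by
      rw [expand, ← hri, ← hwi]
      linarith [hdef, hri]
    simp only [Finset.sum_apply, Pi.smul_apply, smul_eq_mul]
    rw [hvfin]
    exact Finset.sum_congr rfl fun u hu => by
      rw [Int.toNat_of_nonneg (hrkey u hu)]
end

section
/- (Steinitz Lemma) Let v₁,…,v_k be a non-empty finite sequence of vectors in ℝ^d, let v = Σ_{j=1}^k v_j and I = max_{1≤j≤k} ‖v_j‖∞. Then there exists a permutation σ of {1,…,k} such that for every n ∈ {d,…,k}: ‖Σ_{j=1}^n v_{σ(j)} − ((n−d)/k)·v‖∞ ≤ d·I. -/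
open Finset

lemma purify {d k : ℕ} (v : Fin k → Fin d → ℝ) (N : ℕ) :
    ∀ (B : Finset (Fin k)) (β : Fin k → ℝ),
      (B.filter (fun j => 0 < β j ∧ β j < 1)).card ≤ N →
      (∀ j, 0 ≤ β j ∧ β j ≤ 1) →
      ∃ β' : Fin k → ℝ, (∀ j, 0 ≤ β' j ∧ β' j ≤ 1) ∧
        (∑ j ∈ B, β' j = ∑ j ∈ B, β j) ∧
        (∑ j ∈ B, β' j • v j = ∑ j ∈ B, β j • v j) ∧
        (B.filter (fun j => 0 < β' j ∧ β' j < 1)).card ≤ d + 1 := by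
  induction N with
  | zero =>
    intro B β h hb
    exact ⟨β, hb, rfl, rfl, le_trans h (by omega)⟩
  | succ N ih =>
    intro B β h hb
    by_cases hc : (B.filter (fun j => 0 < β j ∧ β j < 1)).card ≤ d + 1
    · exact ⟨β, hb, rfl, rfl, hc⟩
    push_neg at hc
    set F := B.filter (fun j => 0 < β j ∧ β j < 1) with hF
    -- linear dependence among the (v j, 1) for j ∈ F
    have hnli : ¬ LinearIndependent ℝ (fun j : ↥F => ((v j, 1) : (Fin d → ℝ) × ℝ)) := by
      intro hli
      have h1 := hli.fintype_card_le_finrank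
      have h2 : Module.finrank ℝ ((Fin d → ℝ) × ℝ) = d + 1 := by simp
      rw [h2, Fintype.card_coe] at h1
      omega
    rw [Fintype.not_linearIndependent_iff] at hnli
    obtain ⟨g, hg0, i0, hgi0⟩ := hnli
    set δ : Fin k → ℝ := fun j => if h : j ∈ F then g ⟨j, h⟩ else 0 with hδ
    have hδF : ∀ j, j ∉ F → δ j = 0 := fun j hj => by simp [hδ, hj]
    have hδsum : ∑ j ∈ F, δ j • ((v j, 1) : (Fin d → ℝ) × ℝ) = 0 := by
      rw [← Finset.sum_attach F (fun j => δ j • ((v j, 1) : (Fin d → ℝ) × ℝ))]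
      rw [← hg0]
      apply Finset.sum_congr rfl
      intro x _
      simp [hδ, x.2]
    have hδ1 : ∑ j ∈ F, δ j = 0 := by
      have := congrArg Prod.snd hδsum
      simpa [Prod.snd_sum] using this
    have hδv : ∑ j ∈ F, δ j • v j = 0 := by
      have := congrArg Prod.fst hδsum
      simpa [Prod.fst_sum] using this
    -- the set of moving coordinates
    set Fnz := F.filter (fun j => δ j ≠ 0) with hFnz
    have hFnzne : Fnz.Nonempty := ⟨i0, by simp [hFnz, hδ, i0.2, hgi0]⟩
    set ρ : Fin k → ℝ := fun j => if 0 < δ j then (1 - β j) / δ j else β j / (-δ j) with hρ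
    obtain ⟨js, hjsmem, hjsmin⟩ := Finset.exists_min_image Fnz ρ hFnzne
    set t := ρ js with ht
    have hjsF : js ∈ F := (Finset.mem_filter.mp hjsmem).1
    have hjsδ : δ js ≠ 0 := (Finset.mem_filter.mp hjsmem).2
    have hjsfrac : 0 < β js ∧ β js < 1 := (Finset.mem_filter.mp hjsF).2
    have htpos : 0 < t := by
      rcases lt_or_gt_of_ne hjsδ with hneg | hpos
      · have he : t = β js / (-δ js) := by rw [ht, hρ]; simp [not_lt.mpr (le_of_lt hneg)]
        rw [he]; exact div_pos hjsfrac.1 (by linarith)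
      · have he : t = (1 - β js) / δ js := by rw [ht, hρ]; simp [hpos]
        rw [he]; exact div_pos (by linarith [hjsfrac.2]) hpos
    set β₂ : Fin k → ℝ := fun j => β j + t * δ j with hβ₂
    -- bounds on β₂
    have key : ∀ j ∈ F, δ j ≠ 0 → 0 ≤ β₂ j ∧ β₂ j ≤ 1 := by
      intro j hjF hjδ
      have hjfrac : 0 < β j ∧ β j < 1 := (Finset.mem_filter.mp hjF).2
      have hmin : t ≤ ρ j := hjsmin j (Finset.mem_filter.mpr ⟨hjF, hjδ⟩)
      rcases lt_or_gt_of_ne hjδ with hneg | hpos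
      · have hρj : ρ j = β j / (-δ j) := by rw [hρ]; simp [not_lt.mpr (le_of_lt hneg)]
        rw [hρj] at hmin
        have h1 : t * (-δ j) ≤ β j := by
          rw [← le_div_iff₀ (by linarith)] ; exact hmin
        constructor
        · simp only [hβ₂]; nlinarith
        · simp only [hβ₂]; nlinarith [mul_pos htpos (neg_pos.mpr hneg)]
      · have hρj : ρ j = (1 - β j) / δ j := by rw [hρ]; simp [hpos]
        rw [hρj] at hmin
        have h1 : t * δ j ≤ 1 - β j := by
          rw [← le_div_iff₀ hpos]; exact hmin
        constructor
        · simp only [hβ₂]; nlinarith [mul_pos htpos hpos]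
        · simp only [hβ₂]; linarith
    have hb₂ : ∀ j, 0 ≤ β₂ j ∧ β₂ j ≤ 1 := by
      intro j
      by_cases hjF : j ∈ F
      · by_cases hjδ : δ j = 0
        · simp only [hβ₂, hjδ, mul_zero, add_zero]; exact hb j
        · exact key j hjF hjδ
      · simp only [hβ₂, hδF j hjF, mul_zero, add_zero]; exact hb j
    -- sums preserved
    have hδ1B : ∑ j ∈ B, δ j = 0 :=
      (Finset.sum_subset (Finset.filter_subset _ B) (fun x _ hx => hδF x hx)).symm.trans hδ1
    have hδvB : ∑ j ∈ B, δ j • v j = 0 :=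
      (Finset.sum_subset (Finset.filter_subset _ B)
        (fun x _ hx => by simp [hδF x hx])).symm.trans hδv
    have hs₂ : ∑ j ∈ B, β₂ j = ∑ j ∈ B, β j := by
      simp only [hβ₂, Finset.sum_add_distrib, ← Finset.mul_sum, hδ1B, mul_zero, add_zero]
    have hv₂ : ∑ j ∈ B, β₂ j • v j = ∑ j ∈ B, β j • v j := by
      simp only [hβ₂, add_smul, Finset.sum_add_distrib, mul_smul, ← Finset.smul_sum, hδvB,
        smul_zero, add_zero]
    -- β₂ js is 0 or 1
    have hjs01 : β₂ js = 0 ∨ β₂ js = 1 := by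
      rcases lt_or_gt_of_ne hjsδ with hneg | hpos
      · left
        have he : t = β js / (-δ js) := by rw [ht, hρ]; simp [not_lt.mpr (le_of_lt hneg)]
        have hts : t * δ js = -β js := by
          rw [he, div_mul_eq_mul_div, div_neg, mul_div_cancel_right₀ _ hjsδ]
        simp only [hβ₂]; linarith
      · right
        have he : t = (1 - β js) / δ js := by rw [ht, hρ]; simp [hpos]
        have hts : t * δ js = 1 - β js := by rw [he]; field_simp
        simp only [hβ₂]; linarith
    -- fractional set shrinks
    have hsub : B.filter (fun j => 0 < β₂ j ∧ β₂ j < 1) ⊆ F.erase js := by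
      intro j hj
      obtain ⟨hjB, hjfrac⟩ := Finset.mem_filter.mp hj
      have hjF : j ∈ F := by
        by_contra hjF
        have : β₂ j = β j := by simp [hβ₂, hδF j hjF]
        rw [this] at hjfrac
        exact hjF (Finset.mem_filter.mpr ⟨hjB, hjfrac⟩)
      refine Finset.mem_erase.mpr ⟨?_, hjF⟩
      intro hje
      subst hje
      rcases hjs01 with h0 | h1
      · rw [h0] at hjfrac; linarith [hjfrac.1]
      · rw [h1] at hjfrac; linarith [hjfrac.2]
    have hcard₂ : (B.filter (fun j => 0 < β₂ j ∧ β₂ j < 1)).card ≤ N := by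
      have := Finset.card_le_card hsub
      rw [Finset.card_erase_of_mem hjsF] at this
      omega
    obtain ⟨β', hb', hs', hv', hf'⟩ := ih B β₂ hcard₂ hb₂
    exact ⟨β', hb', hs'.trans hs₂, hv'.trans hv₂, hf'⟩

def Pp {d k : ℕ} (v : Fin k → Fin d → ℝ) (B : Finset (Fin k)) : Prop :=
  ∃ α : Fin k → ℝ, (∀ j, 0 ≤ α j ∧ α j ≤ 1) ∧
    (∑ j ∈ B, α j = (B.card : ℝ) - d) ∧
    (∑ j ∈ B, α j • v j = (((B.card : ℝ) - d) / (k : ℝ)) • ∑ j, v j)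

lemma zero_ex {d k : ℕ} (B : Finset (Fin k)) (β : Fin k → ℝ)
    (hb : ∀ j, 0 ≤ β j ∧ β j ≤ 1)
    (hsum : ∑ j ∈ B, β j = (B.card : ℝ) - 1 - d)
    (hfrac : (B.filter (fun j => 0 < β j ∧ β j < 1)).card ≤ d + 1) :
    ∃ i ∈ B, β i = 0 := by
  by_contra hno
  push_neg at hno
  set F := B.filter (fun j => 0 < β j ∧ β j < 1) with hF
  set O := B.filter (fun j => β j = 1) with hO
  have hBFO : B = F ∪ O := by
    ext j
    simp only [hF, hO, Finset.mem_union, Finset.mem_filter]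
    constructor
    · intro hj
      have h0 : 0 < β j := lt_of_le_of_ne (hb j).1 (Ne.symm (hno j hj))
      rcases lt_or_eq_of_le (hb j).2 with h1 | h1
      · exact Or.inl ⟨hj, h0, h1⟩
      · exact Or.inr ⟨hj, h1⟩
    · rintro (⟨hj, _⟩ | ⟨hj, _⟩) <;> exact hj
  have hdisj : Disjoint F O := by
    rw [Finset.disjoint_left]
    intro a haF haO
    have h1 := (Finset.mem_filter.mp haF).2.2
    have h2 := (Finset.mem_filter.mp haO).2
    linarith
  have hcard : (B.card : ℝ) = F.card + O.card := by
    rw [hBFO, Finset.card_union_of_disjoint hdisj]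
    push_cast; ring
  have hsplit : ∑ j ∈ B, β j = (∑ j ∈ F, β j) + O.card := by
    rw [hBFO, Finset.sum_union hdisj]
    congr 1
    rw [Finset.sum_congr rfl (fun j hj => (Finset.mem_filter.mp hj).2), Finset.sum_const,
      nsmul_eq_mul, mul_one]
  set s : ℝ := ∑ j ∈ F, β j with hs
  have hseq : s = (F.card : ℝ) - 1 - d := by
    have := hsum
    rw [hsplit, hcard] at this
    linarith
  have hsnonneg : 0 ≤ s :=
    Finset.sum_nonneg (fun j _ => (hb j).1)
  have hFne : F.Nonempty := by
    rw [← Finset.card_pos]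
    by_contra hFc
    push_neg at hFc
    interval_cases h : F.card
    · push_cast at hseq; linarith
  have hspos : 0 < s :=
    Finset.sum_pos (fun j hj => (Finset.mem_filter.mp hj).2.1) hFne
  have : (F.card : ℝ) ≤ d + 1 := by exact_mod_cast hfrac
  linarith

lemma drop_elt {d k : ℕ} (v : Fin k → Fin d → ℝ) (B : Finset (Fin k))
    (hd : d < B.card) (h : Pp v B) : ∃ i ∈ B, Pp v (B.erase i) := by
  obtain ⟨α, hab, has, hav⟩ := h
  have hm1 : (0:ℝ) < (B.card : ℝ) - d := by
    have : (d:ℝ) < B.card := by exact_mod_cast hd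
    linarith
  set c : ℝ := ((B.card : ℝ) - 1 - d) / ((B.card : ℝ) - d) with hc
  have hc0 : 0 ≤ c := by
    apply div_nonneg _ (le_of_lt hm1)
    have : (d:ℝ) + 1 ≤ B.card := by exact_mod_cast hd
    linarith
  have hc1 : c ≤ 1 := by
    rw [hc, div_le_one hm1]; linarith
  set β : Fin k → ℝ := fun j => c * α j with hβ
  have hbb : ∀ j, 0 ≤ β j ∧ β j ≤ 1 := by
    intro j
    constructor
    · exact mul_nonneg hc0 (hab j).1
    · calc c * α j ≤ c * 1 := by
            exact mul_le_mul_of_nonneg_left (hab j).2 hc0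
        _ ≤ 1 := by linarith
  have hkey : c * ((B.card : ℝ) - d) = (B.card : ℝ) - 1 - d := by
    rw [hc]; field_simp
  have hbs : ∑ j ∈ B, β j = (B.card : ℝ) - 1 - d := by
    simp only [hβ, ← Finset.mul_sum, has, hkey]
  have hbv : ∑ j ∈ B, β j • v j = (((B.card : ℝ) - 1 - d) / (k : ℝ)) • ∑ j, v j := by
    have h2 : c * (((B.card : ℝ) - d) / (k : ℝ)) = ((B.card : ℝ) - 1 - d) / (k : ℝ) := by
      rw [mul_div_assoc', hkey]
    calc ∑ j ∈ B, β j • v j = ∑ j ∈ B, c • (α j • v j) := by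
          exact Finset.sum_congr rfl fun j _ => mul_smul c (α j) (v j)
      _ = c • ∑ j ∈ B, α j • v j := (Finset.smul_sum).symm
      _ = c • ((((B.card : ℝ) - d) / (k:ℝ)) • ∑ j, v j) := by rw [hav]
      _ = (((B.card : ℝ) - 1 - d) / (k:ℝ)) • ∑ j, v j := by rw [smul_smul, h2]
  obtain ⟨β', hb', hs', hv', hf'⟩ :=
    purify v (B.filter (fun j => 0 < β j ∧ β j < 1)).card B β le_rfl hbb
  obtain ⟨i, hiB, hi0⟩ := zero_ex B β' hb' (hs'.trans hbs) hf'
  refine ⟨i, hiB, β', hb', ?_, ?_⟩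
  · rw [Finset.sum_erase _ hi0, hs'.trans hbs, Finset.card_erase_of_mem hiB]
    have h1 : 1 ≤ B.card := by omega
    push_cast [h1]
    ring
  · rw [Finset.sum_erase _ (by rw [hi0, zero_smul]), hv'.trans hbv,
      Finset.card_erase_of_mem hiB]
    have h1 : 1 ≤ B.card := by omega
    push_cast [h1]
    ring_nf

lemma build_chain {d k : ℕ} (hk : 1 ≤ k) (v : Fin k → Fin d → ℝ) :
    ∀ m : ℕ, ∀ B : Finset (Fin k), B.card = m → d ≤ m → Pp v B →
      ∃ e : ℕ → Fin k, Set.InjOn e (Set.Iio m) ∧ (Finset.range m).image e = B ∧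
        ∀ t, d ≤ t → t ≤ m →
          ((Finset.range t).image e).card = t ∧ Pp v ((Finset.range t).image e) := by
  intro m
  induction m using Nat.strong_induction_on with
  | _ m ih =>
    intro B hcard hdm hPp
    rcases eq_or_lt_of_le hdm with heq | hlt
    · -- base case m = d
      set e : ℕ → Fin k := fun n => if h : n < m then ((B.orderIsoOfFin hcard ⟨n, h⟩ : B) : Fin k)
        else ⟨0, hk⟩ with he
      have hinj : Set.InjOn e (Set.Iio m) := by
        intro a ha b hb hab
        simp only [Set.mem_Iio] at ha hb
        simp only [he, dif_pos ha, dif_pos hb] at hab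
        have := (B.orderIsoOfFin hcard).injective (Subtype.coe_injective hab)
        exact congrArg Fin.val this
      have himg : (Finset.range m).image e = B := by
        apply Finset.eq_of_subset_of_card_le
        · intro x hx
          obtain ⟨n, hn, hen⟩ := Finset.mem_image.mp hx
          rw [Finset.mem_range] at hn
          rw [← hen, he]
          simp only [dif_pos hn]
          exact (B.orderIsoOfFin hcard ⟨n, hn⟩).2
        · rw [Finset.card_image_of_injOn (by rw [Finset.coe_range]; exact hinj),
            Finset.card_range, hcard]
      refine ⟨e, hinj, himg, fun t hdt htm => ?_⟩
      have : t = m := by omega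
      subst this
      rw [himg]
      exact ⟨hcard, hPp⟩
    · -- step case d < m
      obtain ⟨i, hiB, hPp'⟩ := drop_elt v B (by omega) hPp
      have hcard' : (B.erase i).card = m - 1 := by
        rw [Finset.card_erase_of_mem hiB, hcard]
      obtain ⟨e', hinj', himg', hpre'⟩ :=
        ih (m - 1) (by omega) (B.erase i) hcard' (by omega) hPp'
      set e : ℕ → Fin k := fun n => if n = m - 1 then i else e' n with he
      have heagree : ∀ n, n < m - 1 → e n = e' n := by
        intro n hn
        simp only [he, if_neg (by omega : ¬ n = m - 1)]
      have himgsmall : ∀ t, t ≤ m - 1 →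
          (Finset.range t).image e = (Finset.range t).image e' := by
        intro t ht
        apply Finset.image_congr
        intro n hn
        rw [Finset.coe_range, Set.mem_Iio] at hn
        exact heagree n (by omega)
      have hinj : Set.InjOn e (Set.Iio m) := by
        intro a ha b hb hab
        simp only [Set.mem_Iio] at ha hb
        by_cases ha1 : a = m - 1 <;> by_cases hb1 : b = m - 1
        · omega
        · exfalso
          rw [he] at hab
          simp only [if_pos ha1, if_neg hb1] at hab
          have hbmem : e' b ∈ B.erase i := by
            rw [← himg']
            exact Finset.mem_image.mpr ⟨b, Finset.mem_range.mpr (by omega), rfl⟩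
          exact (Finset.mem_erase.mp hbmem).1 (by rw [← hab])
        · exfalso
          rw [he] at hab
          simp only [if_pos hb1, if_neg ha1] at hab
          have hamem : e' a ∈ B.erase i := by
            rw [← himg']
            exact Finset.mem_image.mpr ⟨a, Finset.mem_range.mpr (by omega), rfl⟩
          exact (Finset.mem_erase.mp hamem).1 hab
        · rw [heagree a (by omega), heagree b (by omega)] at hab
          exact hinj' (Set.mem_Iio.mpr (by omega)) (Set.mem_Iio.mpr (by omega)) hab
      have himg : (Finset.range m).image e = B := by
        have hm : m = (m - 1) + 1 := by omega
        rw [hm, Finset.range_add_one, Finset.image_insert, himgsmall (m-1) le_rfl, himg']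
        have : e (m - 1) = i := by simp [he]
        rw [this, Finset.insert_erase hiB]
      refine ⟨e, hinj, himg, fun t hdt htm => ?_⟩
      rcases eq_or_lt_of_le htm with ht | ht
      · subst ht
        rw [himg]
        exact ⟨hcard, hPp⟩
      · rw [himgsmall t (by omega)]
        exact hpre' t hdt (by omega)

lemma bound_from_Pp {d k : ℕ} (v : Fin k → Fin d → ℝ) (S : Finset (Fin k))
    (h : Pp v S) (I : ℝ) (hI : ∀ j, ‖v j‖ ≤ I) :
    ‖(∑ j ∈ S, v j) - (((S.card : ℝ) - d) / (k : ℝ)) • ∑ j, v j‖ ≤ d * I := by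
  obtain ⟨α, hb, hs, hv⟩ := h
  rw [← hv]
  have heq : (∑ j ∈ S, v j) - ∑ j ∈ S, α j • v j = ∑ j ∈ S, (1 - α j) • v j := by
    rw [← Finset.sum_sub_distrib]
    exact Finset.sum_congr rfl fun j _ => by rw [sub_smul, one_smul]
  rw [heq]
  calc ‖∑ j ∈ S, (1 - α j) • v j‖ ≤ ∑ j ∈ S, ‖(1 - α j) • v j‖ := norm_sum_le _ _
    _ ≤ ∑ j ∈ S, (1 - α j) * I := by
        apply Finset.sum_le_sum
        intro j hj
        rw [norm_smul, Real.norm_eq_abs, abs_of_nonneg (by linarith [(hb j).2])]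
        exact mul_le_mul_of_nonneg_left (hI j) (by linarith [(hb j).2])
    _ = (∑ j ∈ S, (1 - α j)) * I := by rw [Finset.sum_mul]
    _ = d * I := by
        rw [Finset.sum_sub_distrib, hs, Finset.sum_const, nsmul_eq_mul, mul_one]
        ring_nf

/-- The Steinitz Lemma: a non-empty finite sequence `v₁, …, v_k` of vectors in `ℝ^d`
(with sum `v` and `I = max_j ‖v_j‖∞`) can be permuted so that every partial sum of
length `n ∈ {d,…,k}` satisfies `‖∑_{j≤n} v_{σ(j)} − ((n−d)/k)·v‖∞ ≤ d·I`.
(The norm on `Fin d → ℝ` is the sup-norm.) -/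
theorem steinitz {d k : ℕ} (hk : 1 ≤ k) (v : Fin k → Fin d → ℝ) :
    ∃ σ : Equiv.Perm (Fin k), ∀ n : ℕ, d ≤ n → n ≤ k →
      ‖(∑ j ∈ Finset.univ.filter (fun j : Fin k => (j : ℕ) < n), v (σ j)) -
          (((n : ℝ) - (d : ℝ)) / (k : ℝ)) • ∑ j, v j‖ ≤
        (d : ℝ) * Finset.univ.sup' ⟨⟨0, hk⟩, Finset.mem_univ _⟩ (fun j => ‖v j‖) := by
  by_cases hdk : d ≤ k
  · set I := Finset.univ.sup' ⟨⟨0, hk⟩, Finset.mem_univ _⟩ (fun j => ‖v j‖) with hIdef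
    have hIle : ∀ j, ‖v j‖ ≤ I :=
      fun j => Finset.le_sup' (fun j => ‖v j‖) (Finset.mem_univ j)
    have hk0 : (k : ℝ) ≠ 0 := Nat.cast_ne_zero.mpr (by omega)
    have hkpos : (0 : ℝ) < k := by positivity
    have hdle : (d : ℝ) ≤ k := by exact_mod_cast hdk
    have hbase : Pp v (Finset.univ : Finset (Fin k)) := by
      refine ⟨fun _ => ((k : ℝ) - d) / (k : ℝ), fun j => ⟨?_, ?_⟩, ?_, ?_⟩
      · apply div_nonneg (by linarith) (le_of_lt hkpos)
      · rw [div_le_one hkpos]; linarith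
      · simp only [Finset.card_univ, Fintype.card_fin]
        rw [Finset.sum_const, Finset.card_univ, Fintype.card_fin, nsmul_eq_mul]
        field_simp
      · simp only [Finset.card_univ, Fintype.card_fin]
        rw [← Finset.smul_sum]
    obtain ⟨e, hinj, himg, hpre⟩ := build_chain hk v k Finset.univ (by simp) hdk hbase
    have hfinj : Function.Injective (fun j : Fin k => e (j : ℕ)) := by
      intro a b hab
      exact Fin.val_injective (hinj (Set.mem_Iio.mpr a.2) (Set.mem_Iio.mpr b.2) hab)
    refine ⟨Equiv.ofBijective _ (Finite.injective_iff_bijective.mp hfinj), fun n hdn hnk => ?_⟩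
    obtain ⟨hcardn, hPpn⟩ := hpre n hdn hnk
    have hsum : ∑ j ∈ Finset.univ.filter (fun j : Fin k => (j : ℕ) < n),
        v ((Equiv.ofBijective _ (Finite.injective_iff_bijective.mp hfinj)) j)
        = ∑ x ∈ (Finset.range n).image e, v x := by
      rw [Finset.sum_image (fun x hx y hy hxy => hinj
        (Set.mem_Iio.mpr (lt_of_lt_of_le (Finset.mem_range.mp hx) hnk))
        (Set.mem_Iio.mpr (lt_of_lt_of_le (Finset.mem_range.mp hy) hnk)) hxy)]
      refine Finset.sum_bij' (fun (j : Fin k) _ => (j : ℕ))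
        (fun n' hn' => (⟨n', lt_of_lt_of_le (Finset.mem_range.mp hn') hnk⟩ : Fin k))
        ?_ ?_ ?_ ?_ ?_
      · intro a ha; exact Finset.mem_range.mpr (Finset.mem_filter.mp ha).2
      · intro a ha; exact Finset.mem_filter.mpr ⟨Finset.mem_univ _, Finset.mem_range.mp ha⟩
      · intro a ha; rfl
      · intro a ha; rfl
      · intro a ha; rfl
    rw [hsum]
    have hfin := bound_from_Pp v _ hPpn I hIle
    rw [hcardn] at hfin
    exact hfin
  · exact ⟨1, fun n hdn hnk => absurd (hdn.trans hnk) hdk⟩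
end

section
/- Let V ⊆ ℤ^d be a d-VAS and define the 2d-VAS V′ = {(x₁,…,x_d,−x₁,…,−x_d) : (x₁,…,x_d) ∈ V} ∪ {e_{d+i} : 1 ≤ i ≤ d}, where e_{d+i} ∈ ℤ^{2d} is the unit vector with 1 in coordinate d+i and 0 elsewhere. Then boxreach(V) = {(v₁,…,v_d) ∈ ℕ^d : (v₁,…,v_d,0,…,0) ∈ reach(V′)}. -/
/-- `t` is reachable in the `d`-VAS `V`. -/
def Reach {d : ℕ} (V : Finset (Fin d → ℤ)) (t : Fin d → ℤ) : Prop :=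
  ∃ π : List (Fin d → ℤ), (∀ v ∈ π, v ∈ V) ∧ π.sum = t ∧
    ∀ j : ℕ, ∀ i : Fin d, 0 ≤ ((π.take j).sum) i

/-- `t` is box-reachable in the `d`-VAS `V`. -/
def BoxReach {d : ℕ} (V : Finset (Fin d → ℤ)) (t : Fin d → ℤ) : Prop :=
  ∃ π : List (Fin d → ℤ), (∀ v ∈ π, v ∈ V) ∧ π.sum = t ∧
    ∀ j : ℕ, ∀ i : Fin d, 0 ≤ ((π.take j).sum) i ∧ ((π.take j).sum) i ≤ t i

/-- The `2d`-VAS `V′ = {(v,−v) : v ∈ V} ∪ {e_{d+i} : 1 ≤ i ≤ d}`. -/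
def doubledVAS {d : ℕ} (V : Finset (Fin d → ℤ)) : Finset (Fin (d + d) → ℤ) :=
  (V.image fun v => Fin.append v (-v)) ∪
    (Finset.univ.image fun i : Fin d => Fin.append (0 : Fin d → ℤ) (Pi.single i 1))

/- ### Auxiliary definitions -/

/-- The step `(v, -v)` of the doubled VAS. -/
def fmap {d : ℕ} (v : Fin d → ℤ) : Fin (d + d) → ℤ := Fin.append v (-v)

/-- The step `e_{d+i}` of the doubled VAS. -/
def emap {d : ℕ} (i : Fin d) : Fin (d + d) → ℤ := Fin.append 0 (Pi.single i 1)

/-- Restriction to the first `d` coordinates. -/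
def rmap {d : ℕ} (w : Fin (d + d) → ℤ) : Fin d → ℤ := fun j => w (Fin.castAdd d j)

/- ### Pointwise evaluation lemmas -/

lemma fmap_castAdd {d : ℕ} (v : Fin d → ℤ) (i : Fin d) :
    fmap v (Fin.castAdd d i) = v i := by
  show Fin.append v (-v) (Fin.castAdd d i) = v i
  rw [Fin.append_left]

lemma fmap_natAdd {d : ℕ} (v : Fin d → ℤ) (i : Fin d) :
    fmap v (Fin.natAdd d i) = -(v i) := by
  show Fin.append v (-v) (Fin.natAdd d i) = -(v i)
  rw [Fin.append_right]; rfl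

lemma emap_castAdd {d : ℕ} (j i : Fin d) :
    emap j (Fin.castAdd d i) = 0 := by
  show Fin.append (0 : Fin d → ℤ) (Pi.single j (1 : ℤ)) (Fin.castAdd d i) = 0
  rw [Fin.append_left]; rfl

lemma emap_natAdd {d : ℕ} (j i : Fin d) :
    emap j (Fin.natAdd d i) = (Pi.single j 1 : Fin d → ℤ) i := by
  show Fin.append (0 : Fin d → ℤ) (Pi.single j (1 : ℤ)) (Fin.natAdd d i) = (Pi.single j 1 : Fin d → ℤ) i
  rw [Fin.append_right]

lemma rmap_fmap {d : ℕ} (v : Fin d → ℤ) : rmap (fmap v) = v := by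
  funext i; exact fmap_castAdd v i

lemma rmap_emap {d : ℕ} (i : Fin d) : rmap (emap i) = 0 := by
  funext j; exact emap_castAdd i j

/- ### Additivity lemmas -/

lemma fmap_add {d : ℕ} (a b : Fin d → ℤ) : fmap (a + b) = fmap a + fmap b := by
  funext x
  refine Fin.addCases (fun i => ?_) (fun i => ?_) x <;>
    simp only [fmap_castAdd, fmap_natAdd, Pi.add_apply, neg_add]

lemma fmap_zero {d : ℕ} : fmap (0 : Fin d → ℤ) = 0 := by
  funext x
  refine Fin.addCases (fun i => ?_) (fun i => ?_) x <;>
    simp only [fmap_castAdd, fmap_natAdd, Pi.zero_apply, neg_zero]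

lemma sum_map_fmap {d : ℕ} (l : List (Fin d → ℤ)) :
    (l.map fmap).sum = fmap l.sum := by
  induction l with
  | nil => simp [fmap_zero]
  | cons a l ih => simp [ih, fmap_add]

lemma rmap_add {d : ℕ} (a b : Fin (d + d) → ℤ) : rmap (a + b) = rmap a + rmap b := rfl

lemma sum_map_rmap {d : ℕ} (l : List (Fin (d + d) → ℤ)) :
    (l.map rmap).sum = rmap l.sum := by
  induction l with
  | nil => rfl
  | cons a l ih => simp [ih, rmap_add]

/-- Evaluating the sum of a list of functions at a point. -/
lemma list_sum_eval {n : ℕ} (l : List (Fin n → ℤ)) (a : Fin n) :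
    l.sum a = (l.map (fun v => v a)).sum := by
  induction l with
  | nil => rfl
  | cons x l ih => simp [ih]

/-- Sum of a `flatMap`. -/
lemma sum_flatMap' {α M : Type*} [AddCommMonoid M] (g : α → List M) (l : List α) :
    (l.flatMap g).sum = (l.map (fun a => (g a).sum)).sum := by
  induction l with
  | nil => rfl
  | cons a l ih => rw [List.flatMap_cons, List.sum_append, ih, List.map_cons, List.sum_cons]

/- ### Removing zero steps from a path -/

lemma sum_filter_ne_zero {M : Type*} [AddCommMonoid M] [DecidableEq M] (l : List M) :
    (l.filter (fun x => x ≠ 0)).sum = l.sum := by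
  induction l with
  | nil => rfl
  | cons a l ih =>
    by_cases h : a = 0
    · rw [List.filter_cons_of_neg (by simp [h]), ih, List.sum_cons, h, zero_add]
    · rw [List.filter_cons_of_pos (by simpa using h), List.sum_cons, ih, List.sum_cons]

lemma take_filter_ne_zero {M : Type*} [AddCommMonoid M] [DecidableEq M] (l : List M) :
    ∀ j : ℕ, ∃ k : ℕ, (((l.filter (fun x => x ≠ 0)).take j)).sum = (l.take k).sum := by
  induction l with
  | nil => intro j; exact ⟨0, by simp⟩
  | cons a l ih =>
    intro j
    by_cases h : a = 0
    · obtain ⟨k, hk⟩ := ih j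
      refine ⟨k + 1, ?_⟩
      rw [List.filter_cons_of_neg (by simp [h]), List.take_succ_cons, List.sum_cons, h,
        zero_add, hk]
    · cases j with
      | zero => exact ⟨0, by simp⟩
      | succ j =>
        obtain ⟨k, hk⟩ := ih j
        refine ⟨k + 1, ?_⟩
        rw [List.filter_cons_of_pos (by simpa using h), List.take_succ_cons, List.sum_cons,
          List.take_succ_cons, List.sum_cons, hk]

/- ### Membership lemma for the doubled VAS -/

lemma mem_doubledVAS_iff {d : ℕ} (V : Finset (Fin d → ℤ)) (w : Fin (d + d) → ℤ) :
    w ∈ doubledVAS V ↔ (∃ v ∈ V, w = fmap v) ∨ ∃ i : Fin d, w = emap i := by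
  simp only [doubledVAS, Finset.mem_union, Finset.mem_image, Finset.mem_univ, true_and]
  constructor
  · rintro (⟨v, hv, rfl⟩ | ⟨i, rfl⟩)
    · exact Or.inl ⟨v, hv, rfl⟩
    · exact Or.inr ⟨i, rfl⟩
  · rintro (⟨v, hv, rfl⟩ | ⟨i, rfl⟩)
    · exact Or.inl ⟨v, hv, rfl⟩
    · exact Or.inr ⟨i, rfl⟩

/- ### The main theorem -/

/-- Box-reachability in a `d`-VAS `V` corresponds exactly to reachability of
`(v₁,…,v_d,0,…,0)` in the `2d`-VAS `V′`. -/
theorem boxReach_iff_reach_doubled {d : ℕ} (V : Finset (Fin d → ℤ)) :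
    ∀ t : Fin d → ℤ,
      BoxReach V t ↔ Reach (doubledVAS V) (Fin.append t (0 : Fin d → ℤ)) := by
  intro t
  constructor
  · -- forward direction
    rintro ⟨π, hmem, hsum, hbox⟩
    have ht0 : ∀ i, 0 ≤ t i := by
      intro i
      have := (hbox π.length i).1
      simpa [List.take_length, hsum] using this
    set E : List (Fin (d + d) → ℤ) :=
      (List.finRange d).flatMap (fun i => List.replicate (t i).toNat (emap i)) with hE
    have hEmem : ∀ w ∈ E, ∃ i : Fin d, w = emap i := by
      intro w hw
      rw [hE, List.mem_flatMap] at hw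
      obtain ⟨i, _, hw⟩ := hw
      exact ⟨i, (List.eq_of_mem_replicate hw)⟩
    have hEnonneg : ∀ (l : List (Fin (d + d) → ℤ)), (∀ w ∈ l, ∃ i : Fin d, w = emap i) →
        ∀ a : Fin (d + d), 0 ≤ l.sum a := by
      intro l hl a
      rw [list_sum_eval]
      apply List.sum_nonneg
      intro x hx
      rw [List.mem_map] at hx
      obtain ⟨w, hw, rfl⟩ := hx
      obtain ⟨i, rfl⟩ := hl w hw
      refine Fin.addCases (fun i' => ?_) (fun i' => ?_) a
      · rw [emap_castAdd]
      · rw [emap_natAdd, Pi.single_apply]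
        split <;> norm_num
    have hEcast : ∀ (l : List (Fin (d + d) → ℤ)), (∀ w ∈ l, ∃ i : Fin d, w = emap i) →
        ∀ i : Fin d, l.sum (Fin.castAdd d i) = 0 := by
      intro l hl i
      rw [list_sum_eval]
      apply List.sum_eq_zero
      intro x hx
      rw [List.mem_map] at hx
      obtain ⟨w, hw, rfl⟩ := hx
      obtain ⟨j, rfl⟩ := hl w hw
      exact emap_castAdd j i
    have hEsumNat : ∀ i : Fin d, E.sum (Fin.natAdd d i) = t i := by
      intro i
      rw [list_sum_eval, hE, List.map_flatMap, sum_flatMap']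
      have h1 : ((List.finRange d).map
            (fun j => ((List.replicate (t j).toNat (emap j)).map
              (fun v => v (Fin.natAdd d i))).sum))
          = (List.finRange d).map (fun j => ((t j).toNat : ℤ) * (Pi.single j 1 : Fin d → ℤ) i) := by
        apply List.map_congr_left
        intro j _
        rw [List.map_replicate, List.sum_replicate, emap_natAdd, nsmul_eq_mul]
      rw [h1, ← Fin.sum_univ_def, Finset.sum_eq_single i]
      · rw [Pi.single_eq_same, mul_one, Int.toNat_of_nonneg (ht0 i)]
      · intro j _ hj
        rw [Pi.single_apply, if_neg (Ne.symm hj), mul_zero]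
      · intro h; exact absurd (Finset.mem_univ i) h
    refine ⟨E ++ π.map fmap, ?_, ?_, ?_⟩
    · intro w hw
      rw [List.mem_append] at hw
      rw [mem_doubledVAS_iff]
      rcases hw with hw | hw
      · exact Or.inr (hEmem w hw)
      · rw [List.mem_map] at hw
        obtain ⟨v, hv, rfl⟩ := hw
        exact Or.inl ⟨v, hmem v hv, rfl⟩
    · rw [List.sum_append, sum_map_fmap, hsum]
      funext x
      refine Fin.addCases (fun i => ?_) (fun i => ?_) x
      · simp only [Pi.add_apply, fmap_castAdd, Fin.append_left, hEcast E hEmem i, zero_add]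
      · simp only [Pi.add_apply, fmap_natAdd, Fin.append_right, hEsumNat i, Pi.zero_apply]
        ring
    · intro j x
      rw [List.take_append, List.sum_append, ← List.map_take, sum_map_fmap]
      have hEtake : ∀ w ∈ E.take j, ∃ i : Fin d, w = emap i :=
        fun w hw => hEmem w (List.mem_of_mem_take hw)
      refine Fin.addCases (fun i => ?_) (fun i => ?_) x
      · rw [Pi.add_apply, hEcast _ hEtake i, fmap_castAdd, zero_add]
        exact (hbox _ i).1
      · rw [Pi.add_apply, fmap_natAdd]
        rcases le_total j E.length with hj | hj
        · rw [Nat.sub_eq_zero_of_le hj]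
          simp only [List.take_zero, List.sum_nil, Pi.zero_apply, neg_zero, add_zero]
          exact hEnonneg _ hEtake _
        · rw [List.take_of_length_le hj, hEsumNat i]
          have := (hbox (j - E.length) i).2
          linarith
  · -- backward direction
    rintro ⟨π', hmem, hsum, hpos⟩
    refine ⟨(π'.map rmap).filter (fun x => x ≠ 0), ?_, ?_, ?_⟩
    · intro v hv
      rw [List.mem_filter] at hv
      obtain ⟨hv1, hv2⟩ := hv
      rw [List.mem_map] at hv1
      obtain ⟨w, hw, rfl⟩ := hv1
      rcases (mem_doubledVAS_iff V w).1 (hmem w hw) with ⟨v', hv', rfl⟩ | ⟨i, rfl⟩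
      · rwa [rmap_fmap]
      · rw [rmap_emap] at hv2
        simp at hv2
    · rw [sum_filter_ne_zero, sum_map_rmap, hsum]
      funext i
      exact Fin.append_left t 0 i
    · intro j i
      obtain ⟨k, hk⟩ := take_filter_ne_zero (π'.map rmap) j
      rw [hk, ← List.map_take, sum_map_rmap]
      have hpair : ∀ (l : List (Fin (d + d) → ℤ)), (∀ w ∈ l, w ∈ doubledVAS V) →
          0 ≤ (l.map (fun w => w (Fin.castAdd d i) + w (Fin.natAdd d i))).sum := by
        intro l hl
        apply List.sum_nonneg
        intro x hx
        rw [List.mem_map] at hx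
        obtain ⟨w, hw, rfl⟩ := hx
        rcases (mem_doubledVAS_iff V w).1 (hl w hw) with ⟨v, _, rfl⟩ | ⟨j', rfl⟩
        · rw [fmap_castAdd, fmap_natAdd]; omega
        · rw [emap_castAdd, emap_natAdd, Pi.single_apply, zero_add]
          split <;> norm_num
      have hsplit : ∀ (l : List (Fin (d + d) → ℤ)),
          (l.map (fun w => w (Fin.castAdd d i) + w (Fin.natAdd d i))).sum
            = l.sum (Fin.castAdd d i) + l.sum (Fin.natAdd d i) := by
        intro l
        induction l with
        | nil => simp
        | cons a l ih =>
          simp only [List.map_cons, List.sum_cons, ih, Pi.add_apply]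
          ring
      have htot : (π'.map (fun w => w (Fin.castAdd d i) + w (Fin.natAdd d i))).sum = t i := by
        rw [hsplit, hsum]
        simp only [Fin.append_left, Fin.append_right, Pi.zero_apply, add_zero]
      have hprefix : (π'.take k).sum (Fin.castAdd d i)
          + (π'.take k).sum (Fin.natAdd d i) ≤ t i := by
        have hdecomp := List.sum_take_add_sum_drop
          (π'.map (fun w => w (Fin.castAdd d i) + w (Fin.natAdd d i))) k
        have hdrop : 0 ≤
            ((π'.map (fun w => w (Fin.castAdd d i) + w (Fin.natAdd d i))).drop k).sum := by
          rw [← List.map_drop]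
          exact hpair _ (fun w hw => hmem w (List.mem_of_mem_drop hw))
        rw [← hsplit, ← htot, List.map_take]
        linarith
      constructor
      · exact hpos k (Fin.castAdd d i)
      · have h2 := hpos k (Fin.natAdd d i)
        show (π'.take k).sum (Fin.castAdd d i) ≤ t i
        linarith
end

section
/- For every finite set V ⊆ ℤ (a 1-VAS) there exists M₁ ∈ ℕ such that for every n ∈ ℕ with n ≥ M₁: n is reachable in V if and only if n is box-reachable in V. -/
private lemma list_sum_nonpos {l : List ℤ} (h : ∀ x ∈ l, x ≤ 0) : l.sum ≤ 0 := by
  induction l with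
  | nil => simp
  | cons a t ih =>
    simp only [List.sum_cons]
    have ha := h a (by simp)
    have ht := ih (fun x hx => h x (by simp [hx]))
    linarith

private lemma list_sum_nonneg {l : List ℤ} (h : ∀ x ∈ l, 0 ≤ x) : 0 ≤ l.sum := by
  induction l with
  | nil => simp
  | cons a t ih =>
    simp only [List.sum_cons]
    have ha := h a (by simp)
    have ht := ih (fun x hx => h x (by simp [hx]))
    linarith

private lemma reorder_aux (B n : ℤ) (hB : 0 ≤ B) (hn : 2 * B ≤ n) :
    ∀ k : ℕ, ∀ L : List ℤ, L.length ≤ k → (∀ a ∈ L, |a| ≤ B) →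
    ∀ c : ℤ, 0 ≤ c → c ≤ n → c + L.sum = n →
    ∃ π : List ℤ, π.Perm L ∧
      ∀ j : ℕ, 0 ≤ c + (π.take j).sum ∧ c + (π.take j).sum ≤ n := by
  intro k
  induction k with
  | zero =>
    intro L hL _ c hc0 hcn _
    interval_cases hl : L.length
    rw [List.length_eq_zero_iff] at hl
    subst hl
    exact ⟨[], List.Perm.refl _, fun j => by simpa using ⟨hc0, hcn⟩⟩
  | succ k ih =>
    intro L hL hmem c hc0 hcn hsum
    match L, hL, hmem, hsum with
    | [], _, _, hsum =>
      exact ⟨[], List.Perm.refl _, fun j => by simpa using ⟨hc0, hcn⟩⟩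
    | x :: xs, hL, hmem, hsum =>
      have key : ∀ a ∈ (x :: xs : List ℤ), 0 ≤ c + a → c + a ≤ n →
          ∃ π : List ℤ, π.Perm (x :: xs) ∧
            ∀ j : ℕ, 0 ≤ c + (π.take j).sum ∧ c + (π.take j).sum ≤ n := by
        intro a ha h1 h2
        have hperm : (x :: xs : List ℤ).Perm (a :: (x :: xs).erase a) :=
          List.perm_cons_erase ha
        have hlen : ((x :: xs).erase a).length ≤ k := by
          rw [List.length_erase_of_mem ha]
          simpa using Nat.le_of_succ_le_succ hL
        have hmem' : ∀ b ∈ (x :: xs).erase a, |b| ≤ B :=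
          fun b hb => hmem b (List.mem_of_mem_erase hb)
        have hsum' : (c + a) + ((x :: xs).erase a).sum = n := by
          have h3 := hperm.sum_eq
          have hs := hsum
          simp only [List.sum_cons] at h3 hs
          linarith [hs, h3]
        obtain ⟨π', hπp, hπ⟩ := ih _ hlen hmem' (c + a) h1 h2 hsum'
        refine ⟨a :: π', (hπp.cons a).trans hperm.symm, fun j => ?_⟩
        cases j with
        | zero => simpa using ⟨hc0, hcn⟩
        | succ j =>
          have := hπ j
          simp only [List.take_succ_cons, List.sum_cons]
          constructor <;> linarith [(hπ j).1, (hπ j).2]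
      by_cases hpos : ∃ a ∈ (x :: xs : List ℤ), 0 < a
      · by_cases hc : c ≤ n - B
        · obtain ⟨a, ha, hap⟩ := hpos
          have haB : a ≤ B := le_of_abs_le (hmem a ha)
          exact key a ha (by linarith) (by linarith)
        · by_cases hneg : ∃ a ∈ (x :: xs : List ℤ), a ≤ 0
          · obtain ⟨a, ha, han⟩ := hneg
            have haB : -B ≤ a := neg_le_of_abs_le (hmem a ha)
            exact key a ha (by linarith) (by linarith)
          · push_neg at hneg
            have hxs : 0 ≤ xs.sum :=
              list_sum_nonneg (fun b hb => le_of_lt (hneg b (by simp [hb])))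
            have hsx : c + x + xs.sum = n := by
              rw [List.sum_cons] at hsum; linarith
            have hx0 : 0 < x := hneg x (by simp)
            exact key x (by simp) (by linarith) (by linarith)
      · push_neg at hpos
        have hxs : xs.sum ≤ 0 :=
          list_sum_nonpos (fun b hb => hpos b (by simp [hb]))
        have hsx : c + x + xs.sum = n := by
          rw [List.sum_cons] at hsum; linarith
        have hx0 : x ≤ 0 := hpos x (by simp)
        have hn0 : 0 ≤ n := by linarith
        exact key x (by simp) (by linarith) (by linarith)

/-- `t` is reachable in the 1-VAS `V`: there is a path (list of elements of `V`)
with effect `t`, all of whose partial sums are non-negative. -/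
def Reach1 (V : Finset ℤ) (t : ℤ) : Prop :=
  ∃ π : List ℤ, (∀ a ∈ π, a ∈ V) ∧ π.sum = t ∧ ∀ j : ℕ, 0 ≤ (π.take j).sum

/-- `t` is box-reachable in the 1-VAS `V`: additionally all partial sums are `≤ t`. -/
def BoxReach1 (V : Finset ℤ) (t : ℤ) : Prop :=
  ∃ π : List ℤ, (∀ a ∈ π, a ∈ V) ∧ π.sum = t ∧
    ∀ j : ℕ, 0 ≤ (π.take j).sum ∧ (π.take j).sum ≤ t

/-- For every 1-VAS there is a threshold `M₁` beyond which reachability and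
box-reachability coincide. -/
theorem reach1_eq_boxReach1_eventually (V : Finset ℤ) :
    ∃ M₁ : ℕ, ∀ n : ℕ, M₁ ≤ n → (Reach1 V n ↔ BoxReach1 V n) := by
  set B : ℤ := ∑ a ∈ V, |a| with hBdef
  have hB : 0 ≤ B := Finset.sum_nonneg (fun a _ => abs_nonneg a)
  refine ⟨(2 * B).toNat, fun n hn => ?_⟩
  have hn' : 2 * B ≤ (n : ℤ) := Int.toNat_le.mp hn
  constructor
  · rintro ⟨π, hmemV, hsum, _⟩
    have hmem : ∀ a ∈ π, |a| ≤ B := by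
      intro a ha
      exact Finset.single_le_sum (f := fun a => |a|) (fun b _ => abs_nonneg b)
        (hmemV a ha)
    have h0n : (0 : ℤ) ≤ (n : ℤ) := by positivity
    obtain ⟨π', hperm, hpre⟩ := reorder_aux B n hB hn' π.length π le_rfl hmem 0
      le_rfl h0n (by simpa using hsum)
    refine ⟨π', fun a ha => hmemV a (hperm.mem_iff.mp ha), ?_, fun j => ?_⟩
    · rw [hperm.sum_eq, hsum]
    · have := hpre j
      constructor <;> linarith [(hpre j).1, (hpre j).2]
  · rintro ⟨π, hmemV, hsum, hpre⟩
    exact ⟨π, hmemV, hsum, fun j => (hpre j).1⟩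
end

section
/- Let V ⊆ ℤ be a finite set (a 1-VAS) containing at least one positive element, let d = min{a ∈ V : a > 0}, and let ‖V‖ = Σ_{a∈V} |a|. Then for every n ∈ ℕ with n > 2‖V‖³: n is reachable in V if and only if there exists k ∈ ℕ with k ≤ ‖V‖³ such that k is reachable in V and k ≡ n (mod d). -/
lemma Reach1.nonneg {V : Finset ℤ} {t : ℤ} (h : Reach1 V t) : 0 ≤ t := by
  obtain ⟨π, _, hs, hp⟩ := h
  have := hp π.length
  rwa [List.take_length, hs] at this

lemma Reach1.add_d {V : Finset ℤ} {t d : ℤ} (hdV : d ∈ V) (hdpos : 0 < d)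
    (h : Reach1 V t) : Reach1 V (t + d) := by
  have ht : 0 ≤ t := h.nonneg
  obtain ⟨π, hmem, hs, hp⟩ := h
  refine ⟨π ++ [d], ?_, by simp [hs], ?_⟩
  · intro a ha
    rcases List.mem_append.1 ha with h | h
    · exact hmem a h
    · simp at h; subst h; exact hdV
  · intro j
    by_cases hj : j ≤ π.length
    · rw [List.take_append_of_le_length hj]; exact hp j
    · rw [List.take_of_length_le (by simp; omega)]
      simp [hs]; linarith

lemma Reach1.add_nsmul {V : Finset ℤ} {t d : ℤ} (hdV : d ∈ V) (hdpos : 0 < d)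
    (h : Reach1 V t) : ∀ m : ℕ, Reach1 V (t + m * d)
  | 0 => by simpa using h
  | (m + 1) => by
      have := (Reach1.add_nsmul hdV hdpos h m).add_d hdV hdpos
      have he : t + (↑(m + 1)) * d = t + ↑m * d + d := by push_cast; ring
      rwa [he]

/-- A "low record" of height roughly `t` exists: an index `k` whose prefix sum is
in `[t, t+N)` and is below every later prefix sum. -/
lemma exists_low_record (π : List ℤ) (N : ℤ) (hN : 1 ≤ N)
    (hstep : ∀ j < π.length, (π.take (j+1)).sum ≤ (π.take j).sum + N)
    (hpre : ∀ j : ℕ, 0 ≤ (π.take j).sum)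
    (t : ℤ) (ht : 0 ≤ t) (htv : t ≤ π.sum) :
    ∃ k ≤ π.length, t ≤ (π.take k).sum ∧ (π.take k).sum < t + N ∧
      ∀ l : ℕ, k ≤ l → (π.take k).sum ≤ (π.take l).sum := by
  classical
  set L := π.length with hL
  have hSL : (π.take L).sum = π.sum := by simp [hL]
  have hD : ∃ k, k ≤ L ∧ ∀ l, k ≤ l → l ≤ L → t ≤ (π.take l).sum := by
    refine ⟨L, le_rfl, fun l h1 h2 => ?_⟩
    have : l = L := le_antisymm h2 h1
    rw [this, hSL]; exact htv
  obtain ⟨hk₀L, hk₀⟩ := Nat.find_spec hD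
  obtain ⟨k, hkmem, hkmin⟩ := Finset.exists_min_image (Finset.Icc (Nat.find hD) L)
    (fun j => (π.take j).sum) ⟨L, Finset.mem_Icc.2 ⟨hk₀L, le_rfl⟩⟩
  rw [Finset.mem_Icc] at hkmem
  obtain ⟨hk1, hk2⟩ := hkmem
  refine ⟨k, hk2, hk₀ k hk1 hk2, ?_, ?_⟩
  · -- (π.take k).sum < t + N
    rcases Nat.eq_zero_or_pos (Nat.find hD) with h0 | hpos
    · have h1 : (π.take k).sum ≤ (π.take 0).sum :=
        hkmin 0 (Finset.mem_Icc.2 ⟨by omega, by omega⟩)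
      simp only [List.take_zero, List.sum_nil] at h1
      omega
    · have hlt : Nat.find hD - 1 < Nat.find hD := by omega
      have hnot := Nat.find_min hD hlt
      push_neg at hnot
      obtain ⟨l, hl1, hl2, hl3⟩ := hnot (by omega)
      have hleq : l = Nat.find hD - 1 := by
        by_contra hne
        have : Nat.find hD ≤ l := by omega
        exact absurd (hk₀ l this hl2) (not_le.2 hl3)
      have hstep' := hstep l (by omega)
      have hsucc : l + 1 = Nat.find hD := by omega
      have h1 : (π.take k).sum ≤ (π.take (l + 1)).sum :=
        hkmin (l + 1) (Finset.mem_Icc.2 ⟨by omega, by omega⟩)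
      omega
  · intro l hl
    by_cases hlL : l ≤ L
    · exact hkmin l (Finset.mem_Icc.2 ⟨le_trans hk1 hl, hlL⟩)
    · have h1 : (π.take l).sum = π.sum := by
        rw [List.take_of_length_le (by omega)]
      rw [h1, ← hSL]
      exact hkmin L (Finset.mem_Icc.2 ⟨hk₀L, le_rfl⟩)

/-- Descent step: any reachable value above `N³` can be decreased by a positive
multiple of `d`, staying reachable and non-negative. -/
lemma descent (V : Finset ℤ) (d : ℤ) (hd : IsLeast {a : ℤ | a ∈ V ∧ 0 < a} d)
    (v : ℤ) (hv : (∑ a ∈ V, |a|) ^ 3 < v) (hr : Reach1 V v) :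
    ∃ w : ℤ, 0 ≤ w ∧ w < v ∧ d ∣ (v - w) ∧ Reach1 V w := by
  classical
  obtain ⟨⟨hdV, hdpos⟩, hdmin⟩ := hd
  set N : ℤ := ∑ a ∈ V, |a| with hNdef
  have habs : ∀ a ∈ V, |a| ≤ N := fun a ha =>
    Finset.single_le_sum (fun b _ => abs_nonneg b) ha
  have hdN : d ≤ N := le_trans (le_abs_self d) (habs d hdV)
  have hN1 : 1 ≤ N := le_trans hdpos hdN
  obtain ⟨π, hmem, hsum, hpre⟩ := hr
  set L := π.length with hL
  set S : ℕ → ℤ := fun j => (π.take j).sum with hS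
  have hstep : ∀ j < π.length, (π.take (j+1)).sum ≤ (π.take j).sum + N := by
    intro j hj
    rw [List.take_succ, List.getElem?_eq_getElem hj]
    simp only [List.sum_append, Option.toList_some, List.sum_cons, List.sum_nil, add_zero]
    have hmemj : π[j] ∈ V := hmem _ (List.getElem_mem hj)
    have := le_trans (le_abs_self π[j]) (habs _ hmemj)
    linarith
  -- choose low records at heights c*N for c = 0..d.toNat
  have hKex : ∀ c : ℕ, ∃ k, c ≤ d.toNat →
      (k ≤ L ∧ (c : ℤ) * N ≤ S k ∧ S k < (c : ℤ) * N + N ∧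
        ∀ l : ℕ, k ≤ l → S k ≤ S l) := by
    intro c
    by_cases hc : c ≤ d.toNat
    · have hcN : (c : ℤ) * N ≤ π.sum := by
        have hc' : (c : ℤ) ≤ d := by
          have := Int.toNat_of_nonneg (le_of_lt hdpos)
          omega
        have h1 : (c : ℤ) * N ≤ d * N := by
          apply mul_le_mul_of_nonneg_right hc'; linarith
        have h2 : d * N ≤ N * N := by
          apply mul_le_mul_of_nonneg_right hdN; linarith
        have h3 : N * N ≤ N ^ 3 := by nlinarith
        rw [hsum]; nlinarith
      obtain ⟨k, hk1, hk2, hk3, hk4⟩ := exists_low_record π N hN1 hstep hpre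
        ((c : ℤ) * N) (by positivity) hcN
      exact ⟨k, fun _ => ⟨hk1, hk2, hk3, hk4⟩⟩
    · exact ⟨0, fun h => absurd h hc⟩
  choose K hK using hKex
  -- pigeonhole on residues mod d
  have hmaps : ∀ c ∈ Finset.range (d.toNat + 1),
      S (K c) % d ∈ Finset.Ico (0 : ℤ) d := by
    intro c _
    exact Finset.mem_Ico.2 ⟨Int.emod_nonneg _ (ne_of_gt hdpos), Int.emod_lt_of_pos _ hdpos⟩
  have hcard : (Finset.Ico (0 : ℤ) d).card < (Finset.range (d.toNat + 1)).card := by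
    rw [Int.card_Ico, Finset.card_range]; omega
  obtain ⟨c, hcmem, c', hc'mem, hne, heq⟩ :=
    Finset.exists_ne_map_eq_of_card_lt_of_maps_to hcard hmaps
  rw [Finset.mem_range] at hcmem hc'mem
  -- WLOG c < c'
  wlog hlt : c < c' generalizing c c'
  · exact this c' hc'mem c hcmem (Ne.symm hne) heq.symm (by omega)
  obtain ⟨hKc1, hKc2, hKc3, hKc4⟩ := hK c (by omega)
  obtain ⟨hKc'1, hKc'2, hKc'3, hKc'4⟩ := hK c' (by omega)
  set i := K c with hi
  set j := K c' with hj
  have hSij : S i < S j := by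
    have h1 : (c : ℤ) * N + N ≤ (c' : ℤ) * N := by
      have : (c : ℤ) + 1 ≤ (c' : ℤ) := by exact_mod_cast hlt
      nlinarith
    linarith
  have hdvd : d ∣ S j - S i := by
    have : S i ≡ S j [ZMOD d] := heq
    exact this.dvd
  have hij : i < j := by
    by_contra hle
    exact absurd (hKc'4 i (by omega)) (not_le.2 hSij)
  -- the cut path
  set π' := π.take i ++ π.drop j with hπ'
  have hdropsum : ∀ r : ℕ, ((π.drop j).take r).sum = S (j + r) - S j := by
    intro r
    have h1 : (π.take (j + r)).drop j = (π.drop j).take r := by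
      rw [List.drop_take]; congr 1; omega
    have h2 : π.take j ++ (π.take (j + r)).drop j = π.take (j + r) := by
      have : (π.take (j + r)).take j = π.take j := by
        rw [List.take_take]; congr 1; omega
      conv_lhs => rw [← this]
      exact List.take_append_drop j (π.take (j + r))
    have h3 := congrArg List.sum h2
    rw [List.sum_append] at h3
    rw [← h1]
    simp only [hS]
    omega
  have hπ'sum : π'.sum = v - (S j - S i) := by
    have := List.sum_take_add_sum_drop π j
    simp only [hπ', List.sum_append]
    simp only [hS] at *
    omega
  refine ⟨v - (S j - S i), ?_, by omega, by simpa using hdvd, ?_⟩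
  · -- 0 ≤ w : v ≥ S j and S i ≥ 0
    have hvSj : S j ≤ v := by
      have := hKc'4 L hKc'1
      simp only [hS, hL, List.take_length, hsum] at this ⊢
      have hSi : 0 ≤ S i := hpre i
      simp only [hS] at hSi
      omega
    have hSi : 0 ≤ S i := hpre i
    omega
  · refine ⟨π', ?_, hπ'sum, ?_⟩
    · intro a ha
      rcases List.mem_append.1 ha with h | h
      · exact hmem a (List.mem_of_mem_take h)
      · exact hmem a (List.mem_of_mem_drop h)
    · intro l
      have hlen : (π.take i).length = i := by
        rw [List.length_take]; omega
      rw [hπ', List.take_append, List.sum_append, hlen,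
        List.take_take, hdropsum]
      have h1 : 0 ≤ (π.take (min l i)).sum := hpre _
      have h2 : S j ≤ S (j + (l - i)) := hKc'4 _ (by omega)
      omega

/-- Every reachable value is congruent mod `d` to a reachable value `≤ N³`. -/
lemma reach_small (V : Finset ℤ) (d : ℤ) (hd : IsLeast {a : ℤ | a ∈ V ∧ 0 < a} d) :
    ∀ n : ℕ, Reach1 V n → ∃ k : ℕ, (k : ℤ) ≤ (∑ a ∈ V, |a|) ^ 3 ∧ Reach1 V k ∧
      d ∣ ((n : ℤ) - k) := by
  intro n
  induction n using Nat.strong_induction_on with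
  | _ n ih =>
    intro hr
    by_cases hn : (n : ℤ) ≤ (∑ a ∈ V, |a|) ^ 3
    · exact ⟨n, hn, hr, by simp⟩
    · obtain ⟨w, hw0, hwlt, hwdvd, hwr⟩ := descent V d hd n (by omega) hr
      have hwn : w.toNat < n := by omega
      have hw' : Reach1 V w.toNat := by
        rwa [Int.toNat_of_nonneg hw0]
      obtain ⟨k, hk1, hk2, hk3⟩ := ih w.toNat hwn hw'
      refine ⟨k, hk1, hk2, ?_⟩
      have : ((n : ℤ) - k) = ((n : ℤ) - w) + ((w.toNat : ℤ) - k) := by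
        rw [Int.toNat_of_nonneg hw0]; ring
      rw [this]
      exact dvd_add hwdvd hk3

/-- For a 1-VAS `V` with a positive element, with `d` the least positive element of
`V` and `‖V‖ = Σ_{a∈V} |a|`: every `n > 2‖V‖³` is reachable iff some `k ≤ ‖V‖³`
with `k ≡ n (mod d)` is reachable. -/
theorem reach1_iff_small_residue (V : Finset ℤ) (d : ℤ)
    (hd : IsLeast {a : ℤ | a ∈ V ∧ 0 < a} d) :
    ∀ n : ℕ, 2 * (∑ a ∈ V, |a|) ^ 3 < (n : ℤ) →
      (Reach1 V n ↔
        ∃ k : ℕ, (k : ℤ) ≤ (∑ a ∈ V, |a|) ^ 3 ∧ Reach1 V k ∧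
          (k : ℤ) ≡ (n : ℤ) [ZMOD d]) := by
  intro n hn
  obtain ⟨⟨hdV, hdpos⟩, hdmin⟩ := hd
  set N : ℤ := ∑ a ∈ V, |a| with hNdef
  have hdN : d ≤ N := le_trans (le_abs_self d)
    (Finset.single_le_sum (fun b _ => abs_nonneg b) hdV)
  have hN1 : 1 ≤ N := le_trans hdpos hdN
  constructor
  · intro hr
    obtain ⟨k, hk1, hk2, hk3⟩ := reach_small V d ⟨⟨hdV, hdpos⟩, hdmin⟩ n hr
    exact ⟨k, hk1, hk2, Int.modEq_iff_dvd.2 (by simpa using hk3)⟩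
  · rintro ⟨k, hk1, hk2, hk3⟩
    have hdvd : d ∣ ((n : ℤ) - k) := hk3.dvd
    obtain ⟨q, hq⟩ := hdvd
    have hklt : (k : ℤ) < n := by nlinarith
    have hq0 : 0 < q := by nlinarith
    have := hk2.add_nsmul hdV hdpos q.toNat
    have he : (k : ℤ) + (q.toNat : ℤ) * d = n := by
      rw [Int.toNat_of_nonneg (le_of_lt hq0)]
      linarith [hq, mul_comm q d]
    rwa [he] at this
end

section
/- For every 1-VASS (Q,T) and states q₀, q° ∈ Q there exist bounds B₁, B₂, B₃ ∈ ℕ such that for every x° ∈ ℕ with x° ≥ B₁, the configuration (x°,q°) is box-reachable from (0,q₀) if and only if there exist a linear path scheme αβ*γ with |α|,|β|,|γ| ≤ B₂ whose paths start at q₀, a path θ that closes αβ*γ and ends at q° with |θ| ≤ B₃, and k ∈ ℕ, such that αβᵏγθ is an ℕ-path from (0,q₀) to (x°,q°). -/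
/-!
If `αβᵏγθ` is an ℕ-path to a large `x`, the short parts `α`, `γ`, `θ` contribute little to `x`,
so `β` cannot lose when `k > 0`; then no prefix exceeds `x`, because the overshoot of `β` and of
`γ` is absorbed by `θ`, whose peak is its effect.

Conversely, let `M` bound the updates and take a box path to a large `x`. Among its first passages
above `0, M, …, |Q| M` two are in the same state; between them lies a cycle `β` of positive effect,
and everything up to there stays below `(|Q| + 1) M`. A suffix minimum a bounded distance below
`x` splits off a tail `θ` that never goes below its start. Cutting cycles of zero effect (pigeonhole
on state and counter value) shortens `α`, `β` and `θ` without creating new prefix values; cutting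
cycles whose effect is a multiple of `effL β` shortens the middle part `γ`, and the effect lost
there is restored by `k` extra turns of `β`.
-/

/-- `IsPathFrom T q l q'`: the list of transitions `l` forms a path of the 1-VASS
with transition set `T` starting at state `q` and ending at state `q'`. -/
def IsPathFrom {Q : Type*} (T : Finset (Q × ℤ × Q)) : Q → List (Q × ℤ × Q) → Q → Prop
  | q, [], q' => q = q'
  | q, t :: ts, q' => t ∈ T ∧ t.1 = q ∧ IsPathFrom T t.2.2 ts q'

/-- The effect of a list of transitions: the sum of the counter updates. -/
def effL {Q : Type*} (l : List (Q × ℤ × Q)) : ℤ :=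
  (l.map fun t => t.2.1).sum

/-- The peak of a list of transitions: the maximum prefix-sum
(the empty prefix counts, with sum `0`). -/
def peakL {Q : Type*} (l : List (Q × ℤ × Q)) : ℤ :=
  Finset.sup' (Finset.range (l.length + 1))
    (Finset.nonempty_range_iff.mpr (Nat.succ_ne_zero _))
    (fun j => effL (l.take j))

/-- The drop of a list of transitions: the absolute value of the minimum prefix-sum. -/
def dropL {Q : Type*} (l : List (Q × ℤ × Q)) : ℤ :=
  |Finset.inf' (Finset.range (l.length + 1))
      (Finset.nonempty_range_iff.mpr (Nat.succ_ne_zero _))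
      (fun j => effL (l.take j))|

/-- `(x°, q°)` is box-reachable from `(0, q₀)`: there is an ℕ-path from `(0,q₀)`
to `(x°,q°)` all of whose prefix sums lie in `[0, x°]`. -/
def BoxReachConfig {Q : Type*} (T : Finset (Q × ℤ × Q)) (q₀ : Q) (x : ℤ) (qf : Q) : Prop :=
  ∃ l : List (Q × ℤ × Q), IsPathFrom T q₀ l qf ∧ effL l = x ∧
    ∀ j : ℕ, 0 ≤ effL (l.take j) ∧ effL (l.take j) ≤ x

section

variable {Q : Type*} {T : Finset (Q × ℤ × Q)}

@[simp] lemma effL_nil : effL ([] : List (Q × ℤ × Q)) = 0 := rfl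

@[simp] lemma effL_append (u v : List (Q × ℤ × Q)) : effL (u ++ v) = effL u + effL v := by
  simp [effL]

lemma effL_flatten_replicate (k : ℕ) (β : List (Q × ℤ × Q)) :
    effL (List.replicate k β).flatten = k * effL β := by
  induction k with
  | zero => simp
  | succ k ih =>
    rw [List.replicate_succ', List.flatten_append, effL_append, ih, List.flatten_singleton]
    push_cast
    ring

lemma effL_take_of_length_le {l : List (Q × ℤ × Q)} {j : ℕ} (h : l.length ≤ j) :
    effL (l.take j) = effL l := by
  rw [List.take_of_length_le h]

lemma effL_take_add (l : List (Q × ℤ × Q)) (m v : ℕ) :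
    effL (l.take (m + v)) = effL (l.take m) + effL ((l.drop m).take v) := by
  rw [List.take_add, effL_append]

lemma effL_take_add_effL_drop (l : List (Q × ℤ × Q)) (m : ℕ) :
    effL (l.take m) + effL (l.drop m) = effL l := by
  rw [← effL_append, List.take_append_drop]

lemma abs_effL_le {M : ℕ} {l : List (Q × ℤ × Q)} (hM : ∀ t ∈ l, |t.2.1| ≤ M) :
    |effL l| ≤ l.length * M := by
  induction l with
  | nil => simp
  | cons t l ih =>
    have ht := hM t (List.mem_cons_self ..)
    have hl := ih fun s hs => hM s (List.mem_cons_of_mem _ hs)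
    simp only [effL, List.map_cons, List.sum_cons, List.length_cons] at hl ⊢
    push_cast
    linarith [abs_add_le t.2.1 (l.map fun t => t.2.1).sum]

lemma abs_effL_take_le {M : ℕ} {l : List (Q × ℤ × Q)} (hM : ∀ t ∈ l, |t.2.1| ≤ M) (j : ℕ) :
    |effL (l.take j)| ≤ l.length * M := by
  refine (abs_effL_le fun t ht => hM t (List.mem_of_mem_take ht)).trans ?_
  gcongr
  exact List.length_take_le' _ _

lemma effL_take_succ_le {M : ℕ} {l : List (Q × ℤ × Q)} (hM : ∀ t ∈ l, |t.2.1| ≤ M) (j : ℕ) :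
    effL (l.take (j + 1)) ≤ effL (l.take j) + M := by
  have h := abs_effL_le (l := (l.drop j).take 1)
    fun t ht => hM t (List.mem_of_mem_drop (List.mem_of_mem_take ht))
  have hlen : ((l.drop j).take 1).length ≤ 1 := List.length_take_le _ _
  rw [effL_take_add]
  nlinarith [abs_le.1 h, (Nat.cast_le (α := ℤ)).2 hlen]

lemma effL_take_le_peakL (l : List (Q × ℤ × Q)) (j : ℕ) : effL (l.take j) ≤ peakL l := by
  rcases le_or_gt j l.length with h | h
  · exact Finset.le_sup' (fun j => effL (l.take j)) (Finset.mem_range.2 (Nat.lt_succ_of_le h))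
  · rw [effL_take_of_length_le h.le, ← effL_take_of_length_le le_rfl]
    exact Finset.le_sup' (fun j => effL (l.take j)) (Finset.mem_range.2 (Nat.lt_succ_self _))

lemma peakL_le {l : List (Q × ℤ × Q)} {c : ℤ} (h : ∀ j, effL (l.take j) ≤ c) : peakL l ≤ c :=
  Finset.sup'_le _ _ fun j _ => h j

lemma effL_le_peakL (l : List (Q × ℤ × Q)) : effL l ≤ peakL l := by
  simpa using effL_take_le_peakL l l.length

lemma peakL_eq_effL {l : List (Q × ℤ × Q)} (h : ∀ j, effL (l.take j) ≤ effL l) :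
    peakL l = effL l :=
  le_antisymm (peakL_le h) (effL_le_peakL l)

lemma dropL_eq_zero {l : List (Q × ℤ × Q)} (h : ∀ j, 0 ≤ effL (l.take j)) : dropL l = 0 := by
  rw [dropL, abs_eq_zero]
  refine le_antisymm ?_ (Finset.le_inf' _ _ fun j _ => h j)
  exact (Finset.inf'_le (fun j => effL (l.take j)) (Finset.mem_range.2 l.length.succ_pos)).trans
    (by simp)

end

section

variable {Q : Type*} {T : Finset (Q × ℤ × Q)}

def endState (q : Q) : List (Q × ℤ × Q) → Q
  | [] => q
  | t :: ts => endState t.2.2 ts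

lemma isPathFrom_append_iff {a b : Q} {u v : List (Q × ℤ × Q)} :
    IsPathFrom T a (u ++ v) b ↔
      IsPathFrom T a u (endState a u) ∧ IsPathFrom T (endState a u) v b := by
  induction u generalizing a with
  | nil => simp [IsPathFrom, endState]
  | cons t u ih => simp only [List.cons_append, IsPathFrom, endState, ih, and_assoc]

lemma IsPathFrom.endState_eq {a b : Q} {l : List (Q × ℤ × Q)} (h : IsPathFrom T a l b) :
    endState a l = b := by
  induction l generalizing a with
  | nil => exact h
  | cons t l ih => exact ih h.2.2

lemma IsPathFrom.append {a b c : Q} {u v : List (Q × ℤ × Q)} (hu : IsPathFrom T a u c)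
    (hv : IsPathFrom T c v b) : IsPathFrom T a (u ++ v) b := by
  rw [isPathFrom_append_iff, hu.endState_eq]
  exact ⟨hu, hv⟩

lemma IsPathFrom.take {a b : Q} {l : List (Q × ℤ × Q)} (h : IsPathFrom T a l b) (m : ℕ) :
    IsPathFrom T a (l.take m) (endState a (l.take m)) :=
  (isPathFrom_append_iff.1 (by rwa [List.take_append_drop])).1

lemma IsPathFrom.drop {a b : Q} {l : List (Q × ℤ × Q)} (h : IsPathFrom T a l b) (m : ℕ) :
    IsPathFrom T (endState a (l.take m)) (l.drop m) b :=
  (isPathFrom_append_iff.1 (by rwa [List.take_append_drop])).2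

lemma IsPathFrom.flatten_replicate {q : Q} {β : List (Q × ℤ × Q)} (hβ : IsPathFrom T q β q)
    (k : ℕ) : IsPathFrom T q (List.replicate k β).flatten q := by
  induction k with
  | zero => rfl
  | succ k ih => simpa [List.replicate_succ'] using ih.append hβ

lemma IsPathFrom.forall_mem {a b : Q} {l : List (Q × ℤ × Q)} (h : IsPathFrom T a l b) :
    ∀ t ∈ l, t ∈ T := by
  induction l generalizing a with
  | nil => simp
  | cons s l ih =>
    intro t ht
    rcases List.mem_cons.1 ht with rfl | ht
    exacts [h.1, ih h.2.2 t ht]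

lemma length_shortcut_lt {l : List (Q × ℤ × Q)} {i j : ℕ} (hij : i < j) (hj : j ≤ l.length) :
    (l.take i ++ l.drop j).length < l.length := by
  simp only [List.length_append, List.length_take, List.length_drop]
  omega

end

/-- `StaysIn (Set.Ici 0) h l` says that `l` is an ℕ-path from counter value `h`. -/
def StaysIn {Q : Type*} (S : Set ℤ) (h : ℤ) (l : List (Q × ℤ × Q)) : Prop :=
  ∀ j, h + effL (l.take j) ∈ S

section
variable {Q : Type*} {S S' : Set ℤ} {h : ℤ}

lemma StaysIn.mono {l : List (Q × ℤ × Q)} (hl : StaysIn S h l) (hS : S ⊆ S') : StaysIn S' h l :=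
  fun j => hS (hl j)

@[simp] lemma staysIn_nil : StaysIn S h ([] : List (Q × ℤ × Q)) ↔ h ∈ S := by
  simp [StaysIn]

lemma StaysIn.add_effL_mem {l : List (Q × ℤ × Q)} (hl : StaysIn S h l) : h + effL l ∈ S := by
  simpa using hl l.length

lemma staysIn_append {u v : List (Q × ℤ × Q)} :
    StaysIn S h (u ++ v) ↔ StaysIn S h u ∧ StaysIn S (h + effL u) v := by
  refine ⟨fun huv => ⟨fun j => ?_, fun j => ?_⟩, fun ⟨hu, hv⟩ j => ?_⟩
  · rcases le_or_gt j u.length with hj | hj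
    · simpa [List.take_append_of_le_length hj] using huv j
    · simpa [effL_take_of_length_le hj.le] using huv u.length
  · simpa [List.take_length_add_append, add_assoc] using huv (u.length + j)
  · rw [List.take_append, effL_append]
    rcases le_or_gt j u.length with hj | hj
    · simpa [Nat.sub_eq_zero_of_le hj] using hu j
    · simpa [effL_take_of_length_le hj.le, add_assoc] using hv (j - u.length)

lemma StaysIn.take {l : List (Q × ℤ × Q)} (hl : StaysIn S h l) (m : ℕ) :
    StaysIn S h (l.take m) :=
  (staysIn_append.1 (by rwa [List.take_append_drop])).1

lemma StaysIn.drop {l : List (Q × ℤ × Q)} (hl : StaysIn S h l) (m : ℕ) :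
    StaysIn S (h + effL (l.take m)) (l.drop m) :=
  (staysIn_append.1 (by rwa [List.take_append_drop])).2

lemma staysIn_flatten_replicate {β : List (Q × ℤ × Q)} {k : ℕ} (h₀ : h ∈ S)
    (hβ : ∀ a < k, StaysIn S (h + a * effL β) β) : StaysIn S h (List.replicate k β).flatten := by
  induction k with
  | zero => simpa using h₀
  | succ k ih =>
    simp only [List.replicate_succ', List.flatten_append, staysIn_append, effL_flatten_replicate]
    simpa using ⟨ih fun a ha => hβ a (by omega), hβ k (by omega)⟩

lemma StaysIn.of_le_start {c h' : ℤ} {l : List (Q × ℤ × Q)} (hl : StaysIn (Set.Ici c) h l)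
    (hh : h ≤ h') : StaysIn (Set.Ici c) h' l :=
  fun j => Set.mem_Ici.2 ((Set.mem_Ici.1 (hl j)).trans (by linarith))

lemma StaysIn.flatten_replicate {c : ℤ} {β : List (Q × ℤ × Q)} (hβ : StaysIn (Set.Ici c) h β)
    (hβ0 : 0 ≤ effL β) (k : ℕ) : StaysIn (Set.Ici c) h (List.replicate k β).flatten :=
  staysIn_flatten_replicate (by simpa using hβ 0) fun a _ =>
    hβ.of_le_start (le_add_of_nonneg_right (mul_nonneg (Nat.cast_nonneg a) hβ0))

end

lemma List.exists_length_le_of_shorten {α : Type*} (P : List α → Prop) (N : ℕ)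
    (hshort : ∀ l, P l → N < l.length → ∃ l', P l' ∧ l'.length < l.length)
    {l : List α} (hl : P l) : ∃ l', P l' ∧ l'.length ≤ N := by
  obtain ⟨l', hl', hmin⟩ := (measure List.length).wf.has_min {l | P l} ⟨l, hl⟩
  refine ⟨l', hl', not_lt.1 fun hN => ?_⟩
  obtain ⟨l'', hl'', hlt⟩ := hshort l' hl' hN
  exact hmin l'' hl'' hlt

section
variable {Q : Type*} [Fintype Q] {T : Finset (Q × ℤ × Q)} {a b : Q}

/-- Pigeonhole on (state, key) pairs at the `l.length + 1` positions of a long path yields a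
cycle that can be cut out. -/
lemma IsPathFrom.exists_shortcut {l : List (Q × ℤ × Q)} (hl : IsPathFrom T a l b)
    (key : ℕ → ℤ) {K : Finset ℤ} (hK : ∀ u, key u ∈ K)
    (hlen : Fintype.card Q * K.card < l.length) :
    ∃ i j, i < j ∧ j ≤ l.length ∧ key i = key j ∧ IsPathFrom T a (l.take i ++ l.drop j) b := by
  have hcard : ((Finset.univ : Finset Q) ×ˢ K).card < (Finset.range (l.length + 1)).card := by
    simp only [Finset.card_product, Finset.card_univ, Finset.card_range]
    omega
  obtain ⟨i, hi, j, hj, hne, hij⟩ := Finset.exists_ne_map_eq_of_card_lt_of_maps_to hcard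
    (f := fun u => (endState a (l.take u), key u)) (fun u _ => by simp [hK u])
  simp only [Prod.mk.injEq, Finset.mem_range] at hi hj hij
  wlog hlt : i < j generalizing i j
  · exact this j i hne.symm hj hi ⟨hij.1.symm, hij.2.symm⟩ (by omega)
  refine ⟨i, j, hlt, by omega, hij.2, (hl.take i).append ?_⟩
  rw [hij.1]
  exact hl.drop j

/-- Cutting out cycles of effect zero keeps every prefix sum among the original ones. -/
lemma IsPathFrom.exists_short_staysIn {l : List (Q × ℤ × Q)} (hl : IsPathFrom T a l b)
    {S : Finset ℤ} {h : ℤ} (hS : StaysIn (↑S) h l) :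
    ∃ l', IsPathFrom T a l' b ∧ effL l' = effL l ∧ StaysIn (↑S) h l' ∧
      l'.length ≤ Fintype.card Q * S.card := by
  have := List.exists_length_le_of_shorten
    (fun l' => IsPathFrom T a l' b ∧ effL l' = effL l ∧ StaysIn (↑S) h l')
    (Fintype.card Q * S.card) ?_ ⟨hl, rfl, hS⟩
  · simpa only [and_assoc] using this
  rintro l' ⟨hl', heff, hS'⟩ hlen
  obtain ⟨i, j, hij, hj, hkey, hcut⟩ :=
    hl'.exists_shortcut (fun u => h + effL (l'.take u)) (fun u => hS' u) hlen
  have hkey : effL (l'.take i) = effL (l'.take j) := by simpa using hkey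
  refine ⟨_, ⟨hcut, ?_, staysIn_append.2 ⟨hS'.take i, ?_⟩⟩, length_shortcut_lt hij hj⟩
  · rw [effL_append, hkey, effL_take_add_effL_drop, heff]
  · rw [hkey]
    exact hS'.drop j

/-- Cutting out cycles of effect divisible by `E` keeps the effect modulo `E`. -/
lemma IsPathFrom.exists_short_modEq {l : List (Q × ℤ × Q)} (hl : IsPathFrom T a l b)
    {E : ℕ} (hE : 0 < E) :
    ∃ l', IsPathFrom T a l' b ∧ effL l' ≡ effL l [ZMOD E] ∧ l'.length ≤ Fintype.card Q * E := by
  have hEz : (0 : ℤ) < E := by exact_mod_cast hE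
  have hcard : (Finset.Ico (0 : ℤ) E).card = E := by simp
  have := List.exists_length_le_of_shorten
    (fun l' => IsPathFrom T a l' b ∧ effL l' ≡ effL l [ZMOD E])
    (Fintype.card Q * E) ?_ ⟨hl, rfl⟩
  · simpa only [and_assoc] using this
  rintro l' ⟨hl', heff⟩ hlen
  rw [← hcard] at hlen
  obtain ⟨i, j, hij, hj, hkey, hcut⟩ := hl'.exists_shortcut (fun u => effL (l'.take u) % E)
    (fun u => Finset.mem_Ico.2 ⟨Int.emod_nonneg _ hEz.ne', Int.emod_lt_of_pos _ hEz⟩) hlen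
  refine ⟨_, ⟨hcut, ?_⟩, length_shortcut_lt hij hj⟩
  rw [← effL_take_add_effL_drop l' j] at heff
  rw [effL_append]
  exact (Int.ModEq.add_right _ hkey).trans heff

end

section
variable (s : ℕ → ℤ) {M N : ℕ}

lemma exists_first_gt (hstep : ∀ u, s (u + 1) ≤ s u + M) {c : ℤ} (h0 : s 0 ≤ c)
    (hN : c < s N) : ∃ t, c < s t ∧ s t ≤ c + M ∧ ∀ u < t, s u ≤ c := by
  classical
  have hex : ∃ t, c < s t := ⟨N, hN⟩
  refine ⟨Nat.find hex, Nat.find_spec hex, ?_,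
    fun u hu => not_lt.1 (Nat.find_min hex hu)⟩
  obtain ⟨t, ht⟩ : ∃ t, Nat.find hex = t + 1 := Nat.exists_eq_succ_of_ne_zero fun h => by
    have := Nat.find_spec hex
    rw [h] at this
    linarith
  have := not_lt.1 (Nat.find_min hex (show t < Nat.find hex by omega))
  rw [ht]
  linarith [hstep t]

/-- The first passages above `0, M, …, |K| M` are `|K| + 1` positions with strictly increasing
values, so two of them share a colour. -/
lemma exists_rising_repeat (hstep : ∀ u, s (u + 1) ≤ s u + M) {K : Type*} [Fintype K]
    (σ : ℕ → K) (h0 : s 0 ≤ 0) (hN : Fintype.card K * M < s N) :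
    ∃ i j, i < j ∧ σ i = σ j ∧ s i < s j ∧
      ∀ u ≤ j, s u ≤ (Fintype.card K + 1) * M := by
  choose ρ hρgt hρle hρmin using fun a : Fin (Fintype.card K + 1) =>
    exists_first_gt s (c := (a : ℕ) * M) hstep (h0.trans (by positivity))
      (lt_of_le_of_lt (by gcongr; exact_mod_cast Nat.lt_succ_iff.1 a.2) hN)
  obtain ⟨a, b, hab, hσ⟩ := Fintype.exists_ne_map_eq_of_card_lt (σ ∘ ρ) (by simp)
  wlog hlt : a < b generalizing a b
  · exact this b a hab.symm hσ.symm (lt_of_le_of_ne (not_lt.1 hlt) hab.symm)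
  have hMab : ((a : ℕ) : ℤ) * M + M ≤ (b : ℕ) * M := by
    have : ((a : ℕ) : ℤ) + 1 ≤ (b : ℕ) := by exact_mod_cast hlt
    nlinarith
  have hρ : ρ a < ρ b := by
    by_contra hge
    have : s (ρ b) ≤ (a : ℕ) * M + M := by
      rcases (not_lt.1 hge).lt_or_eq with h | h
      · linarith [hρmin a _ h]
      · rw [h]
        exact hρle a
    linarith [hρgt b]
  have hMb : ((b : ℕ) : ℤ) * M + M ≤ (Fintype.card K + 1) * M := by
    have : ((b : ℕ) : ℤ) ≤ Fintype.card K := by exact_mod_cast Nat.lt_succ_iff.1 b.2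
    nlinarith
  refine ⟨ρ a, ρ b, hρ, hσ, by linarith [hρle a, hρgt b], fun u hu => ?_⟩
  rcases hu.lt_or_eq with h | rfl
  · linarith [hρmin b u h]
  · linarith [hρle b]

/-- Take the minimum of `s` over the positions after which `s` stays above `h`. -/
lemma exists_suffix_min (hstep : ∀ u, s (u + 1) ≤ s u + M) {h : ℤ} (h0 : s 0 ≤ h)
    (hN : h < s N) (hconst : ∀ u ≥ N, s u = s N) :
    ∃ t, h < s t ∧ s t ≤ h + M ∧ ∀ u ≥ t, s t ≤ s u := by
  classical
  have hex : ∃ p, ∀ v ≥ p, h < s v := ⟨N, fun v hv => hconst v hv ▸ hN⟩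
  have hpN : Nat.find hex ≤ N := Nat.find_min' hex fun v hv => hconst v hv ▸ hN
  have hp : ∀ v ≥ Nat.find hex, h < s v := Nat.find_spec hex
  have hsp : s (Nat.find hex) ≤ h + M := by
    obtain ⟨q, hq⟩ : ∃ q, Nat.find hex = q + 1 :=
      Nat.exists_eq_succ_of_ne_zero fun h' => by linarith [hp 0 (by omega)]
    obtain ⟨v, hv, hsv⟩ : ∃ v ≥ q, s v ≤ h := by
      simpa using Nat.find_min hex (show q < Nat.find hex by omega)
    obtain rfl : v = q := by
      by_contra hne
      linarith [hp v (by omega)]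
    rw [hq]
    linarith [hstep v]
  have hmem : ∀ {u}, Nat.find hex ≤ u → u ≤ N → u ∈ Finset.Icc (Nat.find hex) N :=
    fun h1 h2 => Finset.mem_Icc.2 ⟨h1, h2⟩
  obtain ⟨t, ht, hmin⟩ := Finset.exists_min_image _ s ⟨_, hmem le_rfl hpN⟩
  rw [Finset.mem_Icc] at ht
  refine ⟨t, hp t ht.1, (hmin _ (hmem le_rfl hpN)).trans hsp, fun u hu => ?_⟩
  rcases le_or_gt u N with huN | huN
  · exact hmin u (hmem (ht.1.trans hu) huN)
  · rw [hconst u huN.le]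
    exact hmin N (hmem hpN le_rfl)

end

def ReachByClosedLPS {Q : Type*} (T : Finset (Q × ℤ × Q)) (q₀ qf : Q) (B₂ B₃ : ℕ) (x : ℤ) :
    Prop :=
  ∃ (q₁ q₂ : Q) (α β γ θ : List (Q × ℤ × Q)) (k : ℕ),
    IsPathFrom T q₀ α q₁ ∧ IsPathFrom T q₁ β q₁ ∧ IsPathFrom T q₁ γ q₂ ∧
    α.length ≤ B₂ ∧ β.length ≤ B₂ ∧ γ.length ≤ B₂ ∧
    IsPathFrom T q₂ θ qf ∧ θ.length ≤ B₃ ∧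
    dropL θ = 0 ∧ peakL θ = effL θ ∧
    max (peakL γ - effL γ) ((peakL β - effL β) - effL γ) ≤ effL θ ∧
    effL (α ++ (List.replicate k β).flatten ++ γ ++ θ) = x ∧
    (∀ j : ℕ, 0 ≤ effL ((α ++ (List.replicate k β).flatten ++ γ ++ θ).take j))

section
variable {Q : Type*} {T : Finset (Q × ℤ × Q)} {a b : Q} {M : ℕ}

lemma IsPathFrom.abs_effL_take_le (hM : ∀ t ∈ T, |t.2.1| ≤ M) {l : List (Q × ℤ × Q)}
    (hl : IsPathFrom T a l b) {B : ℕ} (hB : l.length ≤ B) (j : ℕ) :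
    |effL (l.take j)| ≤ B * M :=
  (_root_.abs_effL_take_le (fun t ht => hM t (hl.forall_mem t ht)) j).trans (by gcongr)

lemma IsPathFrom.abs_effL_le (hM : ∀ t ∈ T, |t.2.1| ≤ M) {l : List (Q × ℤ × Q)}
    (hl : IsPathFrom T a l b) {B : ℕ} (hB : l.length ≤ B) : |effL l| ≤ B * M := by
  simpa using hl.abs_effL_take_le hM hB l.length

/-- Inside the `a`-th copy of `β` the counter is at most `eff α + (a + 1) eff β + over β`, and
the closing path absorbs `over β`. -/
lemma effL_take_le_of_closes {α β γ θ : List (Q × ℤ × Q)} {k : ℕ}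
    (hα : peakL α ≤ effL (α ++ (List.replicate k β).flatten ++ γ ++ θ))
    (hβ : 0 ≤ k * effL β)
    (hclose : max (peakL γ - effL γ) ((peakL β - effL β) - effL γ) ≤ effL θ)
    (hθ : peakL θ = effL θ) (j : ℕ) :
    effL ((α ++ (List.replicate k β).flatten ++ γ ++ θ).take j) ≤
      effL (α ++ (List.replicate k β).flatten ++ γ ++ θ) := by
  set x := effL (α ++ (List.replicate k β).flatten ++ γ ++ θ) with hx
  simp only [effL_append, effL_flatten_replicate] at hx
  rw [max_le_iff] at hclose
  have hcopies : ∀ a < k, ((a : ℤ) + 1) * effL β ≤ k * effL β := by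
    intro a ha
    rcases le_or_gt 0 (effL β) with hβ0 | hβ0
    · exact mul_le_mul_of_nonneg_right (by exact_mod_cast ha) hβ0
    · nlinarith [(Nat.cast_pos (α := ℤ)).2 (Nat.zero_lt_of_lt ha)]
  have peak := effL_take_le_peakL (Q := Q)
  have hbelow : StaysIn (Set.Iic x) 0 (α ++ (List.replicate k β).flatten ++ γ ++ θ) := by
    refine staysIn_append.2 ⟨staysIn_append.2 ⟨staysIn_append.2 ⟨fun v => ?_,
      staysIn_flatten_replicate ?_ fun a ha v => ?_⟩, fun v => ?_⟩, fun v => ?_⟩ <;>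
      simp only [Set.mem_Iic, effL_append, effL_flatten_replicate, zero_add]
    · linarith [peak α v]
    · linarith [effL_le_peakL α]
    · linarith [hcopies a ha, peak β v]
    · linarith [peak γ v]
    · linarith [peak θ v]
  simpa using hbelow j

lemma ReachByClosedLPS.boxReach {q₀ qf : Q} {B₂ B₃ : ℕ} {x : ℤ}
    (hM : ∀ t ∈ T, |t.2.1| ≤ M) (h : ReachByClosedLPS T q₀ qf B₂ B₃ x)
    (hx : (2 * B₂ + B₃) * M ≤ x) : BoxReachConfig T q₀ x qf := by
  obtain ⟨q₁, q₂, α, β, γ, θ, k, hα, hβ, hγ, hlα, -, hlγ, hθ, hlθ, -, hθpeak, hclose, heff,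
    hpos⟩ := h
  have hpath := ((hα.append (hβ.flatten_replicate k)).append hγ).append hθ
  refine ⟨_, hpath, heff, fun j => ⟨hpos j, heff ▸ effL_take_le_of_closes ?_ ?_ hclose hθpeak j⟩⟩
  · exact peakL_le fun j => heff ▸ (le_abs_self _).trans
      ((hα.abs_effL_take_le hM hlα j).trans (by nlinarith))
  · simp only [effL_append, effL_flatten_replicate] at heff
    have := abs_le.1 (hα.abs_effL_le hM hlα)
    have := abs_le.1 (hγ.abs_effL_le hM hlγ)
    have := abs_le.1 (hθ.abs_effL_le hM hlθ)
    linarith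

end

section
variable {Q : Type*} [Fintype Q] {T : Finset (Q × ℤ × Q)} {a b : Q} {M : ℕ}

lemma IsPathFrom.exists_low_cycle {l : List (Q × ℤ × Q)} (hl : IsPathFrom T a l b)
    (hM : ∀ t ∈ T, |t.2.1| ≤ M) {H : ℕ} (hH : (Fintype.card Q + 1) * M ≤ H)
    (hnn : StaysIn (Set.Ici 0) 0 l) (hx : Fintype.card Q * M < effL l) :
    ∃ j α β, IsPathFrom T a α (endState a (l.take j)) ∧
      IsPathFrom T (endState a (l.take j)) β (endState a (l.take j)) ∧
      effL α + effL β = effL (l.take j) ∧ 0 < effL β ∧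
      StaysIn (Set.Icc 0 H) 0 α ∧ StaysIn (Set.Icc 0 H) (effL α) β ∧
      α.length ≤ Fintype.card Q * (H + 1) ∧ β.length ≤ Fintype.card Q * (H + 1) := by
  have hstep := effL_take_succ_le fun t ht => hM t (hl.forall_mem t ht)
  obtain ⟨i, j, hij, hstate, hrise, hlow⟩ := exists_rising_repeat (fun u => effL (l.take u))
    hstep (fun u => endState a (l.take u)) (by simp) (N := l.length) (by simpa using hx)
  have hcard : (Finset.Icc (0 : ℤ) H).card = H + 1 := by simp
  have hband : StaysIn (↑(Finset.Icc (0 : ℤ) H)) 0 (l.take j) := fun u => by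
    rw [Finset.coe_Icc, List.take_take, zero_add]
    exact ⟨by simpa using hnn (min u j),
      (hlow _ (min_le_right _ _)).trans (by exact_mod_cast hH)⟩
  have htake : (l.take j).take i = l.take i := by simp [List.take_take, hij.le]
  obtain ⟨α, hα, hαeff, hαS, hlα⟩ := ((hl.take j).take i).exists_short_staysIn (hband.take i)
  obtain ⟨β, hβ, hβeff, hβS, hlβ⟩ := ((hl.take j).drop i).exists_short_staysIn (hband.drop i)
  rw [htake, hstate] at hα hβ
  rw [htake] at hαeff hβS
  rw [hcard] at hlα hlβ
  rw [Finset.coe_Icc] at hαS hβS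
  have hsplit := effL_take_add_effL_drop (l.take j) i
  rw [htake] at hsplit
  refine ⟨j, α, β, hα, hβ, by linarith, by linarith, hαS, ?_, hlα, hlβ⟩
  simpa [hαeff] using hβS

lemma IsPathFrom.exists_closing_suffix {l : List (Q × ℤ × Q)} (hl : IsPathFrom T a l b)
    (hM : ∀ t ∈ T, |t.2.1| ≤ M) (hbox : StaysIn (Set.Icc 0 (effL l)) 0 l) {G : ℕ} (hG : 0 < G)
    (hGx : G ≤ effL l) :
    ∃ t, effL l - G < effL (l.take t) ∧ effL (l.take t) ≤ effL l - G + M ∧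
      (∀ u ≥ t, effL (l.take t) ≤ effL (l.take u)) ∧
      ∃ θ, IsPathFrom T (endState a (l.take t)) θ b ∧ effL θ = effL l - effL (l.take t) ∧
        StaysIn (Set.Icc 0 (effL θ)) 0 θ ∧ θ.length ≤ Fintype.card Q * G := by
  have hstep := effL_take_succ_le fun t ht => hM t (hl.forall_mem t ht)
  obtain ⟨t, hlo, hhi, hmin⟩ := exists_suffix_min (fun u => effL (l.take u)) hstep
    (h := effL l - G) (N := l.length) (by simpa using hGx)
    (by simp only [List.take_length, sub_lt_self_iff, Int.natCast_pos]; omega)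
    fun u hu => by simp [effL_take_of_length_le hu]
  have hθS : StaysIn (↑(Finset.Icc (effL (l.take t)) (effL l))) (effL (l.take t)) (l.drop t) :=
    fun v => by
      rw [Finset.coe_Icc, ← effL_take_add]
      exact ⟨hmin _ (by omega), by simpa using (hbox (t + v)).2⟩
  obtain ⟨θ, hθ, hθeff, hθS', hlθ⟩ := (hl.drop t).exists_short_staysIn hθS
  have heff : effL θ = effL l - effL (l.take t) := by
    rw [hθeff, ← effL_take_add_effL_drop l t]
    ring
  rw [Finset.coe_Icc] at hθS'
  refine ⟨t, hlo, hhi, hmin, θ, hθ, heff, fun v => ?_, hlθ.trans (Nat.mul_le_mul_left _ ?_)⟩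
  · exact ⟨by linarith [(hθS' v).1], by linarith [(hθS' v).2]⟩
  · rw [Int.card_Icc]
    omega

end

section
variable {Q : Type*} {T : Finset (Q × ℤ × Q)}

lemma reachByClosedLPS_of_parts {q₀ q₁ q₂ qf : Q} {α β γ θ : List (Q × ℤ × Q)} {k H P B₂ B₃ : ℕ}
    {x : ℤ} (hα : IsPathFrom T q₀ α q₁) (hβ : IsPathFrom T q₁ β q₁) (hγ : IsPathFrom T q₁ γ q₂)
    (hθ : IsPathFrom T q₂ θ qf) (hlα : α.length ≤ B₂) (hlβ : β.length ≤ B₂)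
    (hlγ : γ.length ≤ B₂) (hlθ : θ.length ≤ B₃) (hαS : StaysIn (Set.Ici 0) 0 α)
    (hβS : StaysIn (Set.Icc 0 H) (effL α) β) (hβ0 : 0 ≤ effL β)
    (hγP : ∀ v, |effL (γ.take v)| ≤ P) (hθS : StaysIn (Set.Icc 0 (effL θ)) 0 θ)
    (hθeff : H + 2 * P ≤ effL θ) (hθstart : 2 * P ≤ x - effL θ)
    (hx : effL α + k * effL β + effL γ + effL θ = x) :
    ReachByClosedLPS T q₀ qf B₂ B₃ x := by
  have hα0 : 0 ≤ effL α := by simpa using hαS.add_effL_mem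
  have hγeff := abs_le.1 (by simpa using hγP γ.length)
  have hpeakγ : peakL γ ≤ P := peakL_le fun v => (abs_le.1 (hγP v)).2
  have hpeakβ : peakL β ≤ H - effL α := peakL_le fun v => by linarith [(hβS v).2]
  refine ⟨_, _, α, β, γ, θ, k, hα, hβ, hγ, hlα, hlβ, hlγ, hθ, hlθ,
    dropL_eq_zero fun v => by simpa using (hθS v).1,
    peakL_eq_effL fun v => by simpa using (hθS v).2,
    max_le (by linarith) (by linarith), ?_, fun v => ?_⟩
  · simp only [effL_append, effL_flatten_replicate]
    linarith
  have hnn : StaysIn (Set.Ici 0) 0 (α ++ (List.replicate k β).flatten ++ γ ++ θ) := by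
    refine staysIn_append.2 ⟨staysIn_append.2 ⟨staysIn_append.2 ⟨hαS, ?_⟩, fun v => ?_⟩,
      (hθS.mono Set.Icc_subset_Ici_self).of_le_start ?_⟩
    · simpa using (hβS.mono Set.Icc_subset_Ici_self).flatten_replicate hβ0 k
    · simp only [effL_append, effL_flatten_replicate, zero_add, Set.mem_Ici]
      linarith [abs_le.1 (hγP v)]
    · simp only [effL_append, effL_flatten_replicate, zero_add]
      linarith
  simpa using hnn v

end

section
variable {Q : Type*} [Fintype Q] {T : Finset (Q × ℤ × Q)} {M : ℕ}

theorem BoxReachConfig.reachByClosedLPS {q₀ qf : Q} {x : ℤ} (hM : ∀ t ∈ T, |t.2.1| ≤ M)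
    {H P : ℕ} (hH : (Fintype.card Q + 1) * M ≤ H) (hP : Fintype.card Q * H * M ≤ P)
    (hx : 2 * H + 4 * P + M < x) (h : BoxReachConfig T q₀ x qf) :
    ReachByClosedLPS T q₀ qf (Fintype.card Q * (H + 1)) (Fintype.card Q * (H + 2 * P + M + 1))
      x := by
  obtain ⟨l, hl, rfl, hbox⟩ := h
  have hbox' : StaysIn (Set.Icc 0 (effL l)) 0 l := fun j => by simpa using hbox j
  obtain ⟨j, α, β, hα, hβ, hαβ, hβpos, hαS, hβS, hlα, hlβ⟩ :=
    hl.exists_low_cycle hM hH (hbox'.mono Set.Icc_subset_Ici_self) (by nlinarith)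
  -- `θ` gains at least `H + 2 * P`, more than the overshoot of `β` and of the middle part `γ`
  obtain ⟨t, hlo, hhi, hmin, θ, hθ, hθeff, hθS, hlθ⟩ :=
    hl.exists_closing_suffix hM hbox' (G := H + 2 * P + M + 1) (by omega) (by push_cast; omega)
  push_cast at hlo hhi
  have hα0 := hαS.add_effL_mem.1
  have hαβH := hβS.add_effL_mem.2
  have hjt : j ≤ t := by
    by_contra hlt
    linarith [hmin j (by omega)]
  obtain ⟨E, hE⟩ := Int.eq_ofNat_of_zero_le hβpos.le
  obtain ⟨γ, hγ, hγmod, hlγ⟩ := ((hl.take t).drop j).exists_short_modEq (E := E) (by omega)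
  have htake : (l.take t).take j = l.take j := by simp [List.take_take, hjt]
  have hmid := effL_take_add_effL_drop (l.take t) j
  rw [htake] at hγ hmid
  have hlγ' : γ.length ≤ Fintype.card Q * H := hlγ.trans (Nat.mul_le_mul_left _ (by omega))
  have hγP : ∀ v, |effL (γ.take v)| ≤ P := fun v =>
    (hγ.abs_effL_take_le hM hlγ' v).trans (by exact_mod_cast hP)
  have hγeff := abs_le.1 (by simpa using hγP γ.length)
  -- the middle part `γ` is off by a multiple of `E = effL β`, made up by `k` extra turns of `β`
  obtain ⟨d, hd⟩ := hγmod.dvd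
  have hd1 : 0 < d + 1 := pos_of_mul_pos_right (a := (E : ℤ)) (by linarith) (by positivity)
  refine reachByClosedLPS_of_parts (k := (d + 1).toNat) hα hβ hγ hθ hlα hlβ
    (hlγ'.trans (Nat.mul_le_mul_left _ (by omega))) hlθ (hαS.mono Set.Icc_subset_Ici_self) hβS
    hβpos.le hγP hθS (by linarith) (by linarith) ?_
  rw [Int.toNat_of_nonneg hd1.le, hE]
  rw [hE] at hαβ
  linear_combination hαβ + hmid - hd + hθeff

end

/-- Characterization of box-reachability in a 1-VASS by short linear path schemes
`αβ*γ` together with short closing suffixes `θ`, valid above a threshold `B₁`. -/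
theorem boxReach_iff_lps_with_closing {Q : Type*} [Fintype Q]
    (T : Finset (Q × ℤ × Q)) (q₀ qf : Q) :
    ∃ B₁ B₂ B₃ : ℕ, ∀ x : ℕ, B₁ ≤ x →
      (BoxReachConfig T q₀ (x : ℤ) qf ↔
        ∃ (q₁ q₂ : Q) (α β γ θ : List (Q × ℤ × Q)) (k : ℕ),
          -- a linear path scheme αβ*γ starting at q₀, with short components
          IsPathFrom T q₀ α q₁ ∧ IsPathFrom T q₁ β q₁ ∧ IsPathFrom T q₁ γ q₂ ∧
          α.length ≤ B₂ ∧ β.length ≤ B₂ ∧ γ.length ≤ B₂ ∧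
          -- a short path θ that closes αβ*γ and ends at qf
          IsPathFrom T q₂ θ qf ∧ θ.length ≤ B₃ ∧
          dropL θ = 0 ∧ peakL θ = effL θ ∧
          max (peakL γ - effL γ) ((peakL β - effL β) - effL γ) ≤ effL θ ∧
          -- αβᵏγθ is an ℕ-path from (0,q₀) to (x,qf)
          effL (α ++ (List.replicate k β).flatten ++ γ ++ θ) = (x : ℤ) ∧
          (∀ j : ℕ,
            0 ≤ effL ((α ++ (List.replicate k β).flatten ++ γ ++ θ).take j))) := by
  obtain ⟨M, hM⟩ : ∃ M : ℕ, ∀ t ∈ T, |t.2.1| ≤ M := ⟨T.sup fun t => t.2.1.natAbs, fun t ht => by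
    rw [Int.abs_eq_natAbs]
    exact_mod_cast Finset.le_sup (f := fun t => t.2.1.natAbs) ht⟩
  set n := Fintype.card Q
  set H := (n + 1) * M
  set P := n * H * M
  refine ⟨2 * H + 4 * P + M + 1 + (2 * (n * (H + 1)) + n * (H + 2 * P + M + 1)) * M,
    n * (H + 1), n * (H + 2 * P + M + 1), fun x hx => ⟨fun h => ?_, fun h => ?_⟩⟩
  · exact h.reachByClosedLPS hM le_rfl le_rfl (by exact_mod_cast (by omega : 2 * H + 4 * P + M < x))
  · exact ReachByClosedLPS.boxReach hM h (by exact_mod_cast (by omega : _ ≤ x))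
end

section
/- Let α, β, γ be finite sequences of integers with eff(α) ≥ 0 and eff(β) ≥ 1, and let k ≥ 1 be an integer with k·eff(β) > peak(α). Then for the concatenation αβᵏγ of α, k copies of β, and γ: peak(αβᵏγ) = max{ eff(α) + (k−1)·eff(β) + peak(β), eff(α) + k·eff(β) + peak(γ) }. Consequently, the overshoot over(αβᵏγ) = peak(αβᵏγ) − eff(αβᵏγ) equals max{over(γ), over(β) − eff(γ)}, independently of k. -/
/-- The peak of a finite sequence of integers: the maximum prefix sum
(the empty prefix counts, with sum `0`). -/
def peakZ (l : List ℤ) : ℤ :=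
  Finset.sup' (Finset.range (l.length + 1))
    (Finset.nonempty_range_iff.mpr (Nat.succ_ne_zero _))
    (fun j => (l.take j).sum)

lemma le_peakZ (l : List ℤ) (j : ℕ) (hj : j ≤ l.length) :
    (l.take j).sum ≤ peakZ l :=
  Finset.le_sup' (fun j => (l.take j).sum) (Finset.mem_range.mpr (Nat.lt_succ_of_le hj))

lemma peakZ_nonneg (l : List ℤ) : 0 ≤ peakZ l := by
  simpa using le_peakZ l 0 (by omega)

lemma sum_le_peakZ (l : List ℤ) : l.sum ≤ peakZ l := by
  simpa using le_peakZ l l.length le_rfl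

lemma peakZ_append (a b : List ℤ) :
    peakZ (a ++ b) = max (peakZ a) (a.sum + peakZ b) := by
  apply le_antisymm
  · apply Finset.sup'_le
    intro j hj
    simp only [Finset.mem_range, List.length_append] at hj
    rw [List.take_append, List.sum_append]
    by_cases h : j ≤ a.length
    · have h0 : j - a.length = 0 := by omega
      rw [h0]
      simpa using le_max_of_le_left (le_peakZ a j h)
    · have h1 : a.take j = a := List.take_of_length_le (by omega)
      rw [h1]
      refine le_max_of_le_right ?_
      have := le_peakZ b (j - a.length) (by omega)
      linarith
  · apply max_le
    · apply Finset.sup'_le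
      intro j hj
      simp only [Finset.mem_range] at hj
      have heq : ((a ++ b).take j).sum = (a.take j).sum := by
        rw [List.take_append]
        have h0 : j - a.length = 0 := by omega
        simp [h0]
      rw [← heq]
      exact le_peakZ _ j (by simp; omega)
    · have : ∀ j, j ≤ b.length → a.sum + (b.take j).sum ≤ peakZ (a ++ b) := by
        intro j hj
        have heq : ((a ++ b).take (a.length + j)).sum = a.sum + (b.take j).sum := by
          rw [List.take_append, List.sum_append,
            List.take_of_length_le (by omega), Nat.add_sub_cancel_left]
        rw [← heq]
        exact le_peakZ _ _ (by simp; omega)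
      have h2 : peakZ b ≤ peakZ (a ++ b) - a.sum := by
        apply Finset.sup'_le
        intro j hj
        simp only [Finset.mem_range] at hj
        have := this j (by omega)
        linarith
      linarith

lemma sum_flatten_replicate (k : ℕ) (b : List ℤ) :
    ((List.replicate k b).flatten).sum = (k : ℤ) * b.sum := by
  induction k with
  | zero => simp
  | succ n ih =>
      rw [List.replicate_succ, List.flatten_cons, List.sum_append, ih]
      push_cast
      ring

lemma peakZ_flatten_replicate (k : ℕ) (hk : 1 ≤ k) (b : List ℤ) (hb : 0 ≤ b.sum) :
    peakZ ((List.replicate k b).flatten) = ((k : ℤ) - 1) * b.sum + peakZ b := by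
  induction k with
  | zero => omega
  | succ n ih =>
      rcases Nat.eq_zero_or_pos n with h | h
      · subst h; simp
      · rw [List.replicate_succ, List.flatten_cons, peakZ_append, ih h]
        have h1 : (0:ℤ) ≤ (n:ℤ) * b.sum := by positivity
        have : b.sum + (((n:ℤ) - 1) * b.sum + peakZ b)
            = ((n:ℤ) + 1 - 1) * b.sum + peakZ b := by ring
        rw [this, max_eq_right (by push_cast; nlinarith)]
        push_cast
        ring


/-- For integer sequences `α, β, γ` with `eff(α) ≥ 0`, `eff(β) ≥ 1` and
`k ≥ 1` with `k·eff(β) > peak(α)`, the peak of `αβᵏγ` is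
`max{eff(α)+(k−1)eff(β)+peak(β), eff(α)+k·eff(β)+peak(γ)}`, so its overshoot
`peak − eff` equals `max{over(γ), over(β) − eff(γ)}`, independently of `k`. -/
theorem peak_overshoot_of_lps (α β γ : List ℤ)
    (hα : 0 ≤ α.sum) (hβ : 1 ≤ β.sum) (k : ℕ) (hk : 1 ≤ k)
    (hkβ : peakZ α < (k : ℤ) * β.sum) :
    peakZ (α ++ (List.replicate k β).flatten ++ γ) =
      max (α.sum + ((k : ℤ) - 1) * β.sum + peakZ β)
        (α.sum + (k : ℤ) * β.sum + peakZ γ) ∧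
    peakZ (α ++ (List.replicate k β).flatten ++ γ) -
        (α ++ (List.replicate k β).flatten ++ γ).sum =
      max (peakZ γ - γ.sum) ((peakZ β - β.sum) - γ.sum) := by
  have hB : peakZ ((List.replicate k β).flatten)
      = ((k : ℤ) - 1) * β.sum + peakZ β :=
    peakZ_flatten_replicate k hk β (by linarith)
  have hBs := sum_flatten_replicate k β
  have hpβ : β.sum ≤ peakZ β := sum_le_peakZ β
  have hexp : ((k : ℤ) - 1) * β.sum = (k : ℤ) * β.sum - β.sum := by ring
  have key : peakZ (α ++ (List.replicate k β).flatten ++ γ) =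
      max (α.sum + ((k : ℤ) - 1) * β.sum + peakZ β)
        (α.sum + (k : ℤ) * β.sum + peakZ γ) := by
    rw [peakZ_append, peakZ_append, hB, List.sum_append, hBs]
    rw [max_eq_right (by linarith : peakZ α ≤ α.sum + (((k : ℤ) - 1) * β.sum + peakZ β))]
    congr 1 <;> ring
  refine ⟨key, ?_⟩
  rw [key, List.sum_append, List.sum_append, hBs]
  rcases le_total (peakZ γ - γ.sum) (peakZ β - β.sum - γ.sum) with h | h
  · rw [max_eq_right h, max_eq_left (by linarith : α.sum + (k : ℤ) * β.sum + peakZ γ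
      ≤ α.sum + ((k : ℤ) - 1) * β.sum + peakZ β)]
    ring
  · rw [max_eq_left h, max_eq_right (by linarith : α.sum + ((k : ℤ) - 1) * β.sum + peakZ β
      ≤ α.sum + (k : ℤ) * β.sum + peakZ γ)]
    ring
end
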